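/- arXiv:2109.14207 — 4 statements merged into one kernel-verified Lean document; each statement's English description precedes it below -/
import Mathlib

section
/- Let C ⊂ ℝ³ be a compact convex set with nonempty interior. Let 𝒰 ⊆ ∂C be open in the relative topology of ∂C, and suppose every point of 𝒰 is a regular boundary point of C; for r ∈ 𝒰 let n_r denote the (unique) outward unit normal to C at r. Let ℰ ⊆ S² be a set containing no nonempty relatively open subset of the sphere S². If every point r ∈ 𝒰 with n_r ∉ ℰ is not an extreme point of C, then 𝒰 contains no extreme points of C. -/
open Set MeasureTheory Pointwise

/-- The gradient of `u : ℝ² → ℝ` at `x`, represented as the pair of partial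
derivatives (junk value `(0,0)` where `u` is not differentiable). -/
noncomputable def grad2 (u : ℝ × ℝ → ℝ) (x : ℝ × ℝ) : ℝ × ℝ :=
  (fderiv ℝ u x (1, 0), fderiv ℝ u x (0, 1))

/-- Second derivative of `f : ℝ² → ℝ` at `ξ` in directions `v`, `w`. -/
noncomputable def hess2 (f : ℝ × ℝ → ℝ) (ξ v w : ℝ × ℝ) : ℝ :=
  fderiv ℝ (fun y => fderiv ℝ f y v) ξ w

/-- Determinant of the Hessian matrix of `f : ℝ² → ℝ` at `ξ`. -/
noncomputable def hessDet (f : ℝ × ℝ → ℝ) (ξ : ℝ × ℝ) : ℝ :=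
  hess2 f ξ (1, 0) (1, 0) * hess2 f ξ (0, 1) (0, 1)
    - hess2 f ξ (1, 0) (0, 1) * hess2 f ξ (0, 1) (1, 0)

/-- The Hessian matrix of `f` at `ξ` has a negative eigenvalue. -/
def HasNegEigenvalue (f : ℝ × ℝ → ℝ) (ξ : ℝ × ℝ) : Prop :=
  ∃ μ : ℝ, μ < 0 ∧ ∃ v : ℝ × ℝ, v ≠ 0 ∧
    (hess2 f ξ (1, 0) (1, 0) * v.1 + hess2 f ξ (1, 0) (0, 1) * v.2,
     hess2 f ξ (0, 1) (1, 0) * v.1 + hess2 f ξ (0, 1) (0, 1) * v.2) = μ • v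

/-- The functional `F(u) = ∫_Ω f(∇u(x)) dx`. -/
noncomputable def NF (f : ℝ × ℝ → ℝ) (Ω : Set (ℝ × ℝ)) (u : ℝ × ℝ → ℝ) : ℝ :=
  ∫ x in Ω, f (grad2 u x)

/-- Membership in the class `𝒞_M` of convex functions on `Ω` with `0 ≤ u ≤ M`. -/
def MemCM (Ω : Set (ℝ × ℝ)) (M : ℝ) (u : ℝ × ℝ → ℝ) : Prop :=
  ConvexOn ℝ Ω u ∧ ∀ x ∈ Ω, 0 ≤ u x ∧ u x ≤ M

/-- `u` minimizes `F` in the class `𝒞_M`. -/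
def Minimizes (f : ℝ × ℝ → ℝ) (Ω : Set (ℝ × ℝ)) (M : ℝ) (u : ℝ × ℝ → ℝ) : Prop :=
  MemCM Ω M u ∧ ∀ v : ℝ × ℝ → ℝ, MemCM Ω M v → NF f Ω u ≤ NF f Ω v

/-- Epigraph of `u` over `Ω`, as a subset of `ℝ³ = (ℝ × ℝ) × ℝ`. -/
def epi (Ω : Set (ℝ × ℝ)) (u : ℝ × ℝ → ℝ) : Set ((ℝ × ℝ) × ℝ) :=
  {p | p.1 ∈ Ω ∧ u p.1 ≤ p.2}

/-- Euclidean scalar product on `ℝ³ = (ℝ × ℝ) × ℝ`. -/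
def dot3 (n r : (ℝ × ℝ) × ℝ) : ℝ := n.1.1 * r.1.1 + n.1.2 * r.1.2 + n.2 * r.2

/-- `n` is an outward unit normal to the convex set `C` at `r`. -/
def IsOutwardNormal (C : Set ((ℝ × ℝ) × ℝ)) (r n : (ℝ × ℝ) × ℝ) : Prop :=
  dot3 n n = 1 ∧ ∀ y ∈ C, dot3 n (y - r) ≤ 0

/-- `r` is a singular boundary point of `C`: a frontier point with at least two
distinct outward unit normals. -/
def IsSingularPt (C : Set ((ℝ × ℝ) × ℝ)) (r : (ℝ × ℝ) × ℝ) : Prop :=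
  r ∈ frontier C ∧ ∃ n₁ n₂ : (ℝ × ℝ) × ℝ, n₁ ≠ n₂ ∧
    IsOutwardNormal C r n₁ ∧ IsOutwardNormal C r n₂

/-- Epigraph of a one-variable function over `[a, b]`. -/
def epi1 (a b : ℝ) (u : ℝ → ℝ) : Set (ℝ × ℝ) :=
  {p | p.1 ∈ Set.Icc a b ∧ u p.1 ≤ p.2}

/-- The one-dimensional functional `F(v) = ∫_a^b f(v'(x)) dx`. -/
noncomputable def NF1 (f : ℝ → ℝ) (a b : ℝ) (v : ℝ → ℝ) : ℝ :=
  ∫ x in a..b, f (deriv v x)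

/-- The face of a convex set `K ⊂ ℝ³` in direction `n`. -/
def face3 (K : Set ((ℝ × ℝ) × ℝ)) (n : (ℝ × ℝ) × ℝ) : Set ((ℝ × ℝ) × ℝ) :=
  {r | r ∈ K ∧ ∀ ρ ∈ K, dot3 n ρ ≤ dot3 n r}

section Aux5

open Filter Topology

lemma dot3_smul_left (c : ℝ) (n y : (ℝ × ℝ) × ℝ) : dot3 (c • n) y = c * dot3 n y := by
  simp [dot3]; ring

lemma dot3_add_right (n y z : (ℝ × ℝ) × ℝ) : dot3 n (y + z) = dot3 n y + dot3 n z := by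
  simp [dot3]; ring

lemma dot3_sub_right (n y z : (ℝ × ℝ) × ℝ) : dot3 n (y - z) = dot3 n y - dot3 n z := by
  simp [dot3]; ring

lemma dot3_smul_right (c : ℝ) (n y : (ℝ × ℝ) × ℝ) : dot3 n (c • y) = c * dot3 n y := by
  simp [dot3]; ring

lemma continuous_dot3 : Continuous fun p : ((ℝ × ℝ) × ℝ) × ((ℝ × ℝ) × ℝ) => dot3 p.1 p.2 := by
  unfold dot3; fun_prop

lemma clm_repr (f : ((ℝ × ℝ) × ℝ) →L[ℝ] ℝ) (y : (ℝ × ℝ) × ℝ) :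
    f y = dot3 ((f ((1, 0), 0), f ((0, 1), 0)), f ((0, 0), 1)) y := by
  have hy : y = y.1.1 • ((1, 0), 0) + y.1.2 • ((0, 1), 0) + y.2 • (((0 : ℝ), (0 : ℝ)), (1 : ℝ)) := by
    ext <;> simp
  conv_lhs => rw [hy]
  simp only [map_add, ContinuousLinearMap.map_smul, smul_eq_mul]
  simp only [dot3]
  ring

/-- The continuous linear functional `y ↦ dot3 n y`. -/
noncomputable def dotCLM (n : (ℝ × ℝ) × ℝ) : ((ℝ × ℝ) × ℝ) →L[ℝ] ℝ :=
  n.1.1 • ((ContinuousLinearMap.fst ℝ ℝ ℝ).comp (ContinuousLinearMap.fst ℝ (ℝ × ℝ) ℝ)) +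
    n.1.2 • ((ContinuousLinearMap.snd ℝ ℝ ℝ).comp (ContinuousLinearMap.fst ℝ (ℝ × ℝ) ℝ)) +
    n.2 • (ContinuousLinearMap.snd ℝ (ℝ × ℝ) ℝ)

lemma dotCLM_apply (n y : (ℝ × ℝ) × ℝ) : dotCLM n y = dot3 n y := by
  simp [dotCLM, dot3]

lemma sum_pad {M : Type*} [AddCommMonoid M] {α : Type*} [Fintype α]
    (e : α → Fin 4) (he : Function.Injective e) (g : α → M) :
    ∑ i : Fin 4, (if h : ∃ y : α, e y = i then g h.choose else 0) = ∑ y : α, g y := by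
  classical
  have h1 : ∑ i ∈ Finset.univ.image e,
      (if h : ∃ y : α, e y = i then g h.choose else 0)
      = ∑ i : Fin 4, (if h : ∃ y : α, e y = i then g h.choose else 0) := by
    refine Finset.sum_subset (Finset.subset_univ _) ?_
    intro i _ hi
    rw [dif_neg]
    intro ⟨y, hy⟩
    exact hi (Finset.mem_image.2 ⟨y, Finset.mem_univ _, hy⟩)
  rw [← h1, Finset.sum_image (fun y _ y' _ h => he h)]
  refine Finset.sum_congr rfl fun y _ => ?_
  have hex : ∃ y' : α, e y' = e y := ⟨y, rfl⟩
  rw [dif_pos hex]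
  exact congrArg g (he hex.choose_spec)

lemma isCompact_convexHull3 {S : Set ((ℝ × ℝ) × ℝ)} (hS : IsCompact S) :
    IsCompact (convexHull ℝ S) := by
  classical
  rcases S.eq_empty_or_nonempty with rfl | ⟨p0, hp0⟩
  · simp
  have key : convexHull ℝ S =
      (fun q : (Fin 4 → ℝ) × (Fin 4 → (ℝ × ℝ) × ℝ) => ∑ i, q.1 i • q.2 i) ''
        ((stdSimplex ℝ (Fin 4)) ×ˢ Set.univ.pi fun _ => S) := by
    apply Set.Subset.antisymm
    · intro x hx
      rw [convexHull_eq_union] at hx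
      simp only [Set.mem_iUnion] at hx
      obtain ⟨t, hts, hai, hxt⟩ := hx
      have hcard : Fintype.card ↥t ≤ 4 := by
        refine hai.card_le_finrank_succ.trans ?_
        have h1 := Submodule.finrank_le
          (vectorSpan ℝ (Set.range (Subtype.val : ↥t → (ℝ × ℝ) × ℝ)))
        have h2 : Module.finrank ℝ ((ℝ × ℝ) × ℝ) = 3 := by
          simp [Module.finrank_prod, Module.finrank_self]
        omega
      rw [Finset.convexHull_eq] at hxt
      obtain ⟨w, hw0, hw1, hwx⟩ := hxt
      have hx' : ∑ y ∈ t, w y • y = x := by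
        rw [← Finset.centerMass_eq_of_sum_1 _ _ hw1]; exact hwx
      let e : ↥t → Fin 4 := fun y => Fin.castLE hcard ((Fintype.equivFin ↥t) y)
      have he : Function.Injective e :=
        (Fin.castLE_injective hcard).comp (Fintype.equivFin ↥t).injective
      refine ⟨(fun i => if h : ∃ y : ↥t, e y = i then w h.choose else 0,
               fun i => if h : ∃ y : ↥t, e y = i then (h.choose : (ℝ × ℝ) × ℝ) else p0),
              ⟨?_, ?_⟩, ?_⟩
      · constructor
        · intro i
          dsimp only
          split
          · exact hw0 _ (Finset.coe_mem _)
          · exact le_rfl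
        · dsimp only
          rw [sum_pad e he fun y : ↥t => w y]
          rw [Finset.sum_coe_sort t w]
          exact hw1
      · intro i _
        dsimp only
        split
        · exact hts (Finset.coe_mem _)
        · exact hp0
      · dsimp only
        have hmerge : ∀ i : Fin 4,
            (if h : ∃ y : ↥t, e y = i then w h.choose else 0) •
              (if h : ∃ y : ↥t, e y = i then (h.choose : (ℝ × ℝ) × ℝ) else p0)
            = (if h : ∃ y : ↥t, e y = i then w h.choose • (h.choose : (ℝ × ℝ) × ℝ) else 0) := by
          intro i
          by_cases h : ∃ y : ↥t, e y = i
          · rw [dif_pos h, dif_pos h, dif_pos h]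
          · rw [dif_neg h, dif_neg h, dif_neg h, zero_smul]
        calc ∑ i : Fin 4, (if h : ∃ y : ↥t, e y = i then w h.choose else 0) •
              (if h : ∃ y : ↥t, e y = i then (h.choose : (ℝ × ℝ) × ℝ) else p0)
            = ∑ i : Fin 4, (if h : ∃ y : ↥t, e y = i
                then w h.choose • (h.choose : (ℝ × ℝ) × ℝ) else 0) :=
              Finset.sum_congr rfl fun i _ => hmerge i
          _ = ∑ y : ↥t, w y • (y : (ℝ × ℝ) × ℝ) :=
              sum_pad e he fun y : ↥t => w y • (y : (ℝ × ℝ) × ℝ)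
          _ = ∑ y ∈ t, w y • y := Finset.sum_coe_sort t fun y => w y • y
          _ = x := hx'
    · rintro x ⟨⟨w, z⟩, ⟨hw, hz⟩, rfl⟩
      refine (convex_convexHull ℝ S).sum_mem (fun i _ => hw.1 i) hw.2 fun i _ =>
        subset_convexHull ℝ S (hz i (Set.mem_univ i))
  rw [key]
  refine (((isCompact_stdSimplex (𝕜 := ℝ) (ι := Fin 4)).prod (isCompact_univ_pi fun _ => hS)).image ?_)
  exact continuous_finset_sum _ fun i _ =>
    ((continuous_apply i).comp continuous_fst).smul ((continuous_apply i).comp continuous_snd)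

lemma continuous_dot3_right (n : (ℝ × ℝ) × ℝ) : Continuous fun y => dot3 n y :=
  continuous_dot3.comp (continuous_const.prodMk continuous_id)

lemma face3_smul_pos {C : Set ((ℝ × ℝ) × ℝ)} {c : ℝ} (hc : 0 < c) (n : (ℝ × ℝ) × ℝ) :
    face3 C (c • n) = face3 C n := by
  ext x
  simp only [face3, Set.mem_setOf_eq, dot3_smul_left]
  exact and_congr Iff.rfl (forall₂_congr fun ρ _ => mul_le_mul_iff_right₀ hc)

end Aux5

set_option maxHeartbeats 2000000 in
/-- Lemma 2 of the paper. Let `C ⊂ ℝ³` be a compact convex body,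
`U ⊆ ∂C` relatively open and consisting of regular points, and `E ⊆ S²` a set containing
no nonempty relatively open subset of the sphere. If every `r ∈ U` whose normal is not in
`E` fails to be extreme, then `U` contains no extreme points of `C`. -/
theorem statement5
    (C : Set ((ℝ × ℝ) × ℝ)) (hCc : IsCompact C) (hCconv : Convex ℝ C)
    (hCint : (interior C).Nonempty)
    (U : Set ((ℝ × ℝ) × ℝ)) (hUopen : ∃ V : Set ((ℝ × ℝ) × ℝ), IsOpen V ∧ U = V ∩ frontier C)
    (hreg : ∀ r ∈ U, ∃! n : (ℝ × ℝ) × ℝ, IsOutwardNormal C r n)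
    (E : Set ((ℝ × ℝ) × ℝ)) (hEsub : E ⊆ {n | dot3 n n = 1})
    (hEnop : ∀ V : Set ((ℝ × ℝ) × ℝ), IsOpen V →
      V ∩ {n | dot3 n n = 1} ⊆ E → V ∩ {n | dot3 n n = 1} = ∅)
    (hnotext : ∀ r ∈ U, ∀ n : (ℝ × ℝ) × ℝ, IsOutwardNormal C r n → n ∉ E →
      r ∉ Set.extremePoints ℝ C) :
    ∀ r ∈ U, r ∉ Set.extremePoints ℝ C := by
  obtain ⟨V, hVopen, hUeq⟩ := hUopen
  intro r hrU hrext
  have hCclosed : IsClosed C := hCc.isClosed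
  have hrV : r ∈ V := by rw [hUeq] at hrU; exact hrU.1
  have hrC : r ∈ C := by
    rw [hUeq] at hrU
    exact hCclosed.frontier_subset hrU.2
  obtain ⟨ε, hε, hball⟩ := Metric.isOpen_iff.1 hVopen r hrV
  set S : Set ((ℝ × ℝ) × ℝ) := C \ Metric.ball r ε with hSdef
  have hScomp : IsCompact S := hCc.diff Metric.isOpen_ball
  set K := convexHull ℝ S with hKdef
  have hKcomp : IsCompact K := isCompact_convexHull3 hScomp
  have hKC : K ⊆ C := convexHull_min Set.diff_subset hCconv
  have hrK : r ∉ K := by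
    intro hrK
    have h1 : r ∈ K.extremePoints ℝ :=
      inter_extremePoints_subset_extremePoints_of_subset hKC ⟨hrK, hrext⟩
    have h2 : r ∈ S := extremePoints_convexHull_subset h1
    exact h2.2 (Metric.mem_ball_self hε)
  obtain ⟨f, u, hfu, hur⟩ :=
    geometric_hahn_banach_closed_point (convex_convexHull ℝ S) hKcomp.isClosed hrK
  set m' : (ℝ × ℝ) × ℝ := ((f ((1, 0), 0), f ((0, 1), 0)), f ((0, 0), 1)) with hm'def
  have hfm' : ∀ y, f y = dot3 m' y := fun y => clm_repr f y
  have hface : ∃ m'' : (ℝ × ℝ) × ℝ, m'' ≠ 0 ∧ face3 C m'' ⊆ Metric.ball r ε := by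
    by_cases hm0 : m' = 0
    · refine ⟨((0, 0), 1), by simp [Prod.ext_iff], ?_⟩
      intro q hq
      by_contra hqb
      have hqS : q ∈ S := ⟨hq.1, hqb⟩
      have h0 := hfu q (subset_convexHull ℝ S hqS)
      have h1 : f q = 0 := by rw [hfm', hm0]; simp [dot3]
      have h2 : f r = 0 := by rw [hfm', hm0]; simp [dot3]
      linarith
    · refine ⟨m', hm0, ?_⟩
      intro q hq
      by_contra hqb
      have hqS : q ∈ S := ⟨hq.1, hqb⟩
      have h1 := hfu q (subset_convexHull ℝ S hqS)
      have h2 := hq.2 r hrC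
      rw [hfm'] at h1 hur
      linarith
  obtain ⟨m'', hm''0, hm''face⟩ := hface
  have hd : 0 < dot3 m'' m'' := by
    obtain ⟨⟨a, b⟩, c⟩ := m''
    have h0 : ¬(a = 0 ∧ b = 0 ∧ c = 0) := by simpa [Prod.ext_iff] using hm''0
    have hnn : (0 : ℝ) ≤ a * a + b * b + c * c :=
      add_nonneg (add_nonneg (mul_self_nonneg a) (mul_self_nonneg b)) (mul_self_nonneg c)
    simp only [dot3]
    rcases hnn.lt_or_eq with h | h
    · exact h
    · exfalso
      apply h0
      refine ⟨?_, ?_, ?_⟩ <;>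
        nlinarith [mul_self_nonneg a, mul_self_nonneg b, mul_self_nonneg c]
  set s := Real.sqrt (dot3 m'' m'') with hsdef
  have hs : 0 < s := Real.sqrt_pos.2 hd
  set m : (ℝ × ℝ) × ℝ := s⁻¹ • m'' with hmdef
  have hmunit : dot3 m m = 1 := by
    rw [hmdef, dot3_smul_left, dot3_smul_right]
    have hss : s * s = dot3 m'' m'' := Real.mul_self_sqrt hd.le
    field_simp
    linarith
  have hmface : face3 C m ⊆ Metric.ball r ε := by
    rw [hmdef, face3_smul_pos (inv_pos.2 hs)]
    exact hm''face
  have hδ : ∃ δ > 0, ∀ n : (ℝ × ℝ) × ℝ, dist n m < δ → face3 C n ⊆ V := by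
    by_contra hcon
    push_neg at hcon
    have hseq : ∀ k : ℕ, ∃ (n q : (ℝ × ℝ) × ℝ),
        dist n m < 1 / ((k : ℝ) + 1) ∧ q ∈ face3 C n ∧ q ∉ V := by
      intro k
      obtain ⟨n, hn1, hn2⟩ := hcon (1 / ((k : ℝ) + 1)) (by positivity)
      obtain ⟨q, hq1, hq2⟩ := Set.not_subset.1 hn2
      exact ⟨n, q, hn1, hq1, hq2⟩
    choose n q hn hq1 hq2 using hseq
    have hqC : ∀ k, q k ∈ C := fun k => (hq1 k).1
    obtain ⟨q₀, hq₀C, φ, hφ, hconv⟩ := hCc.tendsto_subseq hqC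
    have hnm : Filter.Tendsto (fun k => n (φ k)) Filter.atTop (nhds m) := by
      rw [tendsto_iff_dist_tendsto_zero]
      refine squeeze_zero (fun k => dist_nonneg) (fun k => ?_)
        tendsto_one_div_add_atTop_nhds_zero_nat
      have hle : (1 : ℝ) / ((φ k : ℝ) + 1) ≤ 1 / ((k : ℝ) + 1) := by
        apply one_div_le_one_div_of_le
        · positivity
        · have hk : k ≤ φ k := hφ.le_apply
          exact_mod_cast Nat.succ_le_succ hk
      exact (hn (φ k)).le.trans hle
    have hq₀face : q₀ ∈ face3 C m := by
      refine ⟨hq₀C, fun y hy => ?_⟩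
      have h1 : Filter.Tendsto (fun k => dot3 (n (φ k)) y) Filter.atTop (nhds (dot3 m y)) :=
        (continuous_dot3.tendsto (m, y)).comp (hnm.prodMk_nhds tendsto_const_nhds)
      have h2 : Filter.Tendsto (fun k => dot3 (n (φ k)) (q (φ k))) Filter.atTop
          (nhds (dot3 m q₀)) :=
        (continuous_dot3.tendsto (m, q₀)).comp (hnm.prodMk_nhds hconv)
      exact le_of_tendsto_of_tendsto' h1 h2 fun k => (hq1 (φ k)).2 y hy
    have hq₀V : q₀ ∈ V := hball (hmface hq₀face)
    have hq₀nV : q₀ ∉ V := by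
      have : q₀ ∈ Vᶜ :=
        hVopen.isClosed_compl.mem_of_tendsto hconv
          (Filter.Eventually.of_forall fun k => hq2 (φ k))
      exact this
    exact hq₀nV hq₀V
  obtain ⟨δ, hδ0, hδface⟩ := hδ
  have hsome : ∃ nn : (ℝ × ℝ) × ℝ, nn ∈ Metric.ball m δ ∧ dot3 nn nn = 1 ∧ nn ∉ E := by
    by_contra hcon
    push_neg at hcon
    have hsub : Metric.ball m δ ∩ {n : (ℝ × ℝ) × ℝ | dot3 n n = 1} ⊆ E := by
      rintro nn ⟨h1, h2⟩
      exact hcon nn h1 h2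
    have hemp := hEnop _ Metric.isOpen_ball hsub
    have hm_mem : m ∈ Metric.ball m δ ∩ {n : (ℝ × ℝ) × ℝ | dot3 n n = 1} :=
      ⟨Metric.mem_ball_self hδ0, hmunit⟩
    rw [hemp] at hm_mem
    exact hm_mem
  obtain ⟨nn, hnball, hnunit, hnE⟩ := hsome
  have hfaceV : face3 C nn ⊆ V := hδface nn (Metric.mem_ball.1 hnball)
  obtain ⟨q0, hq0C, hq0max⟩ :=
    hCc.exists_isMaxOn ⟨r, hrC⟩ (continuous_dot3_right nn).continuousOn
  have hfne : (face3 C nn).Nonempty := ⟨q0, hq0C, fun y hy => hq0max hy⟩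
  have hfclosed : IsClosed {x : (ℝ × ℝ) × ℝ | ∀ ρ ∈ C, dot3 nn ρ ≤ dot3 nn x} := by
    have heq : {x : (ℝ × ℝ) × ℝ | ∀ ρ ∈ C, dot3 nn ρ ≤ dot3 nn x}
        = ⋂ ρ ∈ C, {x : (ℝ × ℝ) × ℝ | dot3 nn ρ ≤ dot3 nn x} := by
      ext x; simp
    rw [heq]
    exact isClosed_biInter fun ρ _ => isClosed_le continuous_const (continuous_dot3_right nn)
  have hfcomp : IsCompact (face3 C nn) := by
    have heq : face3 C nn = C ∩ {x : (ℝ × ℝ) × ℝ | ∀ ρ ∈ C, dot3 nn ρ ≤ dot3 nn x} := rfl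
    rw [heq]
    exact hCc.inter_right hfclosed
  obtain ⟨qE, hqE⟩ := hfcomp.extremePoints_nonempty hfne
  have hexp : IsExposed ℝ C (face3 C nn) := by
    intro _
    refine ⟨dotCLM nn, ?_⟩
    ext x
    simp only [face3, Set.mem_setOf_eq, dotCLM_apply]
  have hqEC : qE ∈ C.extremePoints ℝ := hexp.isExtreme.extremePoints_subset_extremePoints hqE
  have hqEface : qE ∈ face3 C nn := extremePoints_subset hqE
  have hqEfr : qE ∈ frontier C := by
    have hqEcl : qE ∈ closure C := subset_closure hqEface.1
    have hqEnint : qE ∉ interior C := by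
      intro hint
      obtain ⟨η, hη, hballq⟩ := Metric.isOpen_iff.1 isOpen_interior qE hint
      set δ0 := η / (2 * (‖nn‖ + 1)) with hδ0def
      have hδ0pos : 0 < δ0 := by positivity
      set y := qE + δ0 • nn with hydef
      have hyq : dist y qE < η := by
        rw [dist_eq_norm, hydef, add_sub_cancel_left, norm_smul, Real.norm_eq_abs,
          abs_of_pos hδ0pos]
        rw [hδ0def]
        rw [div_mul_eq_mul_div, div_lt_iff₀ (by positivity)]
        nlinarith [norm_nonneg nn]
      have hyC : y ∈ C := interior_subset (hballq (Metric.mem_ball.2 hyq))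
      have hmax := hqEface.2 y hyC
      rw [hydef, dot3_add_right, dot3_smul_right, hnunit] at hmax
      linarith
    exact ⟨hqEcl, hqEnint⟩
  have hqEU : qE ∈ U := by rw [hUeq]; exact ⟨hfaceV hqEface, hqEfr⟩
  have hnormal : IsOutwardNormal C qE nn := by
    refine ⟨hnunit, fun y hy => ?_⟩
    rw [dot3_sub_right]
    have := hqEface.2 y hy
    linarith
  exact hnotext qE hqEU nn hnormal hnE hqEC
end

section
/- Let ξ₋ < ξ₊ be real numbers and let g : ℝ → ℝ be strictly concave on the interval [ξ₋, ξ₊]. Let x₁⁻ < x₁⁰ < x₁⁺ and z⁰ ∈ ℝ, and let w : [x₁⁻, x₁⁺] → ℝ be a convex function such that w is differentiable at the endpoints with w'(x₁⁻) = ξ₋ and w'(x₁⁺) = ξ₊, and w(x₁⁻) = z⁰ + ξ₋(x₁⁻ − x₁⁰), w(x₁⁺) = z⁰ + ξ₊(x₁⁺ − x₁⁰), and w(x₁⁰) > z⁰. Then ∫_{x₁⁻}^{x₁⁺} g(w'(x)) dx > g(ξ₋)·(x₁⁰ − x₁⁻) + g(ξ₊)·(x₁⁺ − x₁⁰). -/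
open Set MeasureTheory Pointwise

open Set MeasureTheory

section S10Aux

variable {ξm ξp xm xp : ℝ} {w g : ℝ → ℝ}

lemma s10_slope_bounds (hw : ConvexOn ℝ (Set.Icc xm xp) w) (hxx : xm ≤ xp)
    (hdm : HasDerivWithinAt w ξm (Set.Icc xm xp) xm)
    (hdp : HasDerivWithinAt w ξp (Set.Icc xm xp) xp)
    {a b : ℝ} (ha : a ∈ Set.Icc xm xp) (hb : b ∈ Set.Icc xm xp) (hab : a < b) :
    ξm ≤ slope w a b ∧ slope w a b ≤ ξp := by
  constructor
  · rcases eq_or_lt_of_le ha.1 with h | h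
    · subst h
      exact hw.le_slope_of_hasDerivWithinAt ha hb hab hdm
    · have h1 : ξm ≤ slope w xm a :=
        hw.le_slope_of_hasDerivWithinAt ⟨le_rfl, hxx⟩ ha h hdm
      have h2 : slope w a xm ≤ slope w a b :=
        hw.slope_mono ha ⟨⟨le_rfl, hxx⟩, Set.mem_singleton_iff.not.2 h.ne⟩
          ⟨hb, Set.mem_singleton_iff.not.2 hab.ne'⟩ (h.le.trans hab.le)
      rw [slope_comm] at h2
      linarith
  · rcases eq_or_lt_of_le hb.2 with h | h
    · subst h
      exact hw.slope_le_of_hasDerivWithinAt ha hb hab hdp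
    · have h1 : slope w b xp ≤ ξp :=
        hw.slope_le_of_hasDerivWithinAt hb ⟨hxx, le_rfl⟩ h hdp
      have h2 : slope w b a ≤ slope w b xp :=
        hw.slope_mono hb ⟨ha, Set.mem_singleton_iff.not.2 hab.ne⟩
          ⟨⟨hxx, le_rfl⟩, Set.mem_singleton_iff.not.2 h.ne'⟩ (hab.le.trans h.le)
      rw [slope_comm] at h2
      linarith


/-- The right-derivative function of `w`, with junk value `ξp` from `xp` on. -/
noncomputable def s10R (w : ℝ → ℝ) (xp ξp : ℝ) : ℝ → ℝ :=
  fun x => if x < xp then sInf (slope w x '' Set.Ioo x xp) else ξp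

lemma s10R_bddBelow (hw : ConvexOn ℝ (Set.Icc xm xp) w) (hxx : xm ≤ xp)
    (hdm : HasDerivWithinAt w ξm (Set.Icc xm xp) xm)
    (hdp : HasDerivWithinAt w ξp (Set.Icc xm xp) xp)
    {x : ℝ} (hx : x ∈ Set.Ico xm xp) :
    ξm ∈ lowerBounds (slope w x '' Set.Ioo x xp) := by
  rintro z ⟨y, hy, rfl⟩
  exact (s10_slope_bounds hw hxx hdm hdp ⟨hx.1, hx.2.le⟩
    ⟨hx.1.trans hy.1.le, hy.2.le⟩ hy.1).1

lemma s10R_hasDeriv (hw : ConvexOn ℝ (Set.Icc xm xp) w) (hxx : xm ≤ xp)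
    (hdm : HasDerivWithinAt w ξm (Set.Icc xm xp) xm)
    (hdp : HasDerivWithinAt w ξp (Set.Icc xm xp) xp)
    {x : ℝ} (hx : x ∈ Set.Ico xm xp) :
    HasDerivWithinAt w (s10R w xp ξp x) (Set.Ioi x) x := by
  have hne : (Set.Ioo x xp).Nonempty := Set.nonempty_Ioo.2 hx.2
  have hbdd : BddBelow (slope w x '' Set.Ioo x xp) :=
    ⟨ξm, s10R_bddBelow hw hxx hdm hdp hx⟩
  have hmono : MonotoneOn (slope w x) (Set.Ioo x xp) := by
    apply (hw.slope_mono ⟨hx.1, hx.2.le⟩).mono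
    rintro y hy
    exact ⟨⟨hx.1.trans hy.1.le, hy.2.le⟩, Set.mem_singleton_iff.not.2 hy.1.ne'⟩
  have ht := hmono.tendsto_nhdsWithin_Ioo_right hne hbdd
  rw [s10R, if_pos hx.2]
  exact (hasDerivWithinAt_iff_tendsto_slope' notMem_Ioi_self).2 ht

lemma s10R_mem (hw : ConvexOn ℝ (Set.Icc xm xp) w) (hξ : ξm ≤ ξp) (hxx : xm ≤ xp)
    (hdm : HasDerivWithinAt w ξm (Set.Icc xm xp) xm)
    (hdp : HasDerivWithinAt w ξp (Set.Icc xm xp) xp)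
    {x : ℝ} (hx : x ∈ Set.Icc xm xp) :
    s10R w xp ξp x ∈ Set.Icc ξm ξp := by
  by_cases hxp : x < xp
  · have hx' : x ∈ Set.Ico xm xp := ⟨hx.1, hxp⟩
    have hne : (Set.Ioo x xp).Nonempty := Set.nonempty_Ioo.2 hxp
    have hbdd : BddBelow (slope w x '' Set.Ioo x xp) :=
      ⟨ξm, s10R_bddBelow hw hxx hdm hdp hx'⟩
    rw [s10R, if_pos hxp]
    constructor
    · exact le_csInf (hne.image _) (s10R_bddBelow hw hxx hdm hdp hx')
    · obtain ⟨y, hy⟩ := hne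
      refine (csInf_le hbdd ⟨y, hy, rfl⟩).trans ?_
      exact (s10_slope_bounds hw hxx hdm hdp ⟨hx.1, hxp.le⟩
        ⟨hx.1.trans hy.1.le, hy.2.le⟩ hy.1).2
  · rw [s10R, if_neg hxp]
    exact ⟨hξ, le_rfl⟩

lemma s10R_mono (hw : ConvexOn ℝ (Set.Icc xm xp) w) (hξ : ξm ≤ ξp) (hxx : xm ≤ xp)
    (hdm : HasDerivWithinAt w ξm (Set.Icc xm xp) xm)
    (hdp : HasDerivWithinAt w ξp (Set.Icc xm xp) xp) :
    MonotoneOn (s10R w xp ξp) (Set.Icc xm xp) := by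
  intro a ha b hb hab'
  rcases eq_or_lt_of_le hab' with rfl | hab
  · exact le_rfl
  by_cases hbp : b < xp
  · have hap : a < xp := hab.trans hbp
    have hbddA : BddBelow (slope w a '' Set.Ioo a xp) :=
      ⟨ξm, s10R_bddBelow hw hxx hdm hdp ⟨ha.1, hap⟩⟩
    have h1 : s10R w xp ξp a ≤ slope w a b := by
      rw [s10R, if_pos hap]
      exact csInf_le hbddA ⟨b, ⟨hab, hbp⟩, rfl⟩
    have h2 : slope w a b ≤ s10R w xp ξp b := by
      rw [s10R, if_pos hbp]
      refine le_csInf ((Set.nonempty_Ioo.2 hbp).image _) ?_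
      rintro z ⟨u, hu, rfl⟩
      have h3 : slope w b a ≤ slope w b u :=
        hw.slope_mono hb ⟨ha, Set.mem_singleton_iff.not.2 hab.ne⟩
          ⟨⟨hb.1.trans hu.1.le, hu.2.le⟩, Set.mem_singleton_iff.not.2 hu.1.ne'⟩
          (hab.le.trans hu.1.le)
      rwa [slope_comm] at h3
    linarith
  · have : s10R w xp ξp b = ξp := by rw [s10R, if_neg hbp]
    rw [this]
    exact (s10R_mem hw hξ hxx hdm hdp ha).2


lemma s10_chord_le (hξ : ξm < ξp) (hg : ConcaveOn ℝ (Set.Icc ξm ξp) g)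
    {t : ℝ} (ht : t ∈ Set.Icc ξm ξp) :
    g ξm + (g ξp - g ξm) / (ξp - ξm) * (t - ξm) ≤ g t := by
  have hd : (0:ℝ) < ξp - ξm := sub_pos.2 hξ
  have ha : 0 ≤ (ξp - t) / (ξp - ξm) := div_nonneg (sub_nonneg.2 ht.2) hd.le
  have hb : 0 ≤ (t - ξm) / (ξp - ξm) := div_nonneg (sub_nonneg.2 ht.1) hd.le
  have hab : (ξp - t) / (ξp - ξm) + (t - ξm) / (ξp - ξm) = 1 := by
    field_simp
    ring
  have hco := hg.2 (Set.left_mem_Icc.2 hξ.le) (Set.right_mem_Icc.2 hξ.le) ha hb hab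
  have ht' : ((ξp - t) / (ξp - ξm)) • ξm + ((t - ξm) / (ξp - ξm)) • ξp = t := by
    simp only [smul_eq_mul]
    field_simp
    ring
  rw [ht'] at hco
  have he : g ξm + (g ξp - g ξm) / (ξp - ξm) * (t - ξm)
      = ((ξp - t) / (ξp - ξm)) • g ξm + ((t - ξm) / (ξp - ξm)) • g ξp := by
    simp only [smul_eq_mul]
    field_simp
    ring
  linarith [he ▸ hco]

lemma s10_chord_lt (hξ : ξm < ξp) (hg : StrictConcaveOn ℝ (Set.Icc ξm ξp) g)
    {t : ℝ} (ht : t ∈ Set.Ioo ξm ξp) :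
    g ξm + (g ξp - g ξm) / (ξp - ξm) * (t - ξm) < g t := by
  have hd : (0:ℝ) < ξp - ξm := sub_pos.2 hξ
  have ha : 0 < (ξp - t) / (ξp - ξm) := div_pos (sub_pos.2 ht.2) hd
  have hb : 0 < (t - ξm) / (ξp - ξm) := div_pos (sub_pos.2 ht.1) hd
  have hab : (ξp - t) / (ξp - ξm) + (t - ξm) / (ξp - ξm) = 1 := by
    field_simp
    ring
  have hco := hg.2 (Set.left_mem_Icc.2 hξ.le) (Set.right_mem_Icc.2 hξ.le) hξ.ne ha hb hab
  have ht' : ((ξp - t) / (ξp - ξm)) • ξm + ((t - ξm) / (ξp - ξm)) • ξp = t := by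
    simp only [smul_eq_mul]
    field_simp
    ring
  rw [ht'] at hco
  have he : g ξm + (g ξp - g ξm) / (ξp - ξm) * (t - ξm)
      = ((ξp - t) / (ξp - ξm)) • g ξm + ((t - ξm) / (ξp - ξm)) • g ξp := by
    simp only [smul_eq_mul]
    field_simp
    ring
  linarith [he ▸ hco]

lemma s10_gbound (hξ : ξm < ξp) (hg : ConcaveOn ℝ (Set.Icc ξm ξp) g) :
    ∃ K : ℝ, ∀ t ∈ Set.Icc ξm ξp, |g t| ≤ K := by
  set m := (ξm + ξp) / 2 with hm_def
  have hm : m ∈ Set.Icc ξm ξp := ⟨by simp only [hm_def]; linarith, by simp only [hm_def]; linarith⟩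
  have hmlt : ξm < m := by simp only [hm_def]; linarith
  have hmlt' : m < ξp := by simp only [hm_def]; linarith
  refine ⟨2 * (|g m| + |g ξm| + |g ξp|), fun t ht => ?_⟩
  have hd : (0:ℝ) < ξp - ξm := sub_pos.2 hξ
  have hKnn : (0:ℝ) ≤ |g m| + |g ξm| + |g ξp| := by positivity
  have hlow : min (g ξm) (g ξp) ≤ g t := by
    have hch := s10_chord_le hξ hg ht
    have he : g ξm + (g ξp - g ξm) / (ξp - ξm) * (t - ξm)
        = ((ξp - t) * g ξm + (t - ξm) * g ξp) / (ξp - ξm) := by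
      field_simp
      ring
    rw [he] at hch
    have h1 : min (g ξm) (g ξp) ≤ ((ξp - t) * g ξm + (t - ξm) * g ξp) / (ξp - ξm) := by
      rw [le_div_iff₀ hd]
      have p1 := mul_nonneg (sub_nonneg.2 ht.2) (sub_nonneg.2 (min_le_left (g ξm) (g ξp)))
      have p2 := mul_nonneg (sub_nonneg.2 ht.1) (sub_nonneg.2 (min_le_right (g ξm) (g ξp)))
      nlinarith [p1, p2]
    linarith
  have hup : g t ≤ 2 * (|g m| + |g ξm| + |g ξp|) := by
    rcases le_total t m with htm | htm
    · have hne : (0:ℝ) < ξp - t := sub_pos.2 (htm.trans_lt hmlt')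
      have hl0 : 0 ≤ (ξp - m) / (ξp - t) := div_nonneg (by linarith) hne.le
      have hb0 : 0 ≤ (m - t) / (ξp - t) := div_nonneg (by linarith) hne.le
      have hb1 : (m - t) / (ξp - t) ≤ 1 := by
        rw [div_le_one hne]; linarith
      have hl1 : (ξp - m) / (ξp - t) + (m - t) / (ξp - t) = 1 := by
        field_simp
        ring
      have hco := hg.2 ht (Set.right_mem_Icc.2 hξ.le) hl0 hb0 hl1
      have ht' : ((ξp - m) / (ξp - t)) • t + ((m - t) / (ξp - t)) • ξp = m := by
        simp only [smul_eq_mul]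
        field_simp
        ring
      rw [ht'] at hco
      simp only [smul_eq_mul] at hco
      have hl3 : 1 / 2 ≤ (ξp - m) / (ξp - t) := by
        rw [div_le_div_iff₀ (by norm_num) hne]
        simp only [hm_def]
        linarith [ht.1]
      have h5 : -((m - t) / (ξp - t) * g ξp) ≤ |g ξp| := by
        have : |(m - t) / (ξp - t) * g ξp| ≤ |g ξp| := by
          rw [abs_mul, abs_of_nonneg hb0]
          exact mul_le_of_le_one_left (abs_nonneg _) hb1
        linarith [neg_abs_le ((m - t) / (ξp - t) * g ξp), abs_nonneg ((m - t) / (ξp - t) * g ξp),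
          neg_le_abs ((m - t) / (ξp - t) * g ξp)]
      have hN : (ξp - m) / (ξp - t) * g t ≤ |g m| + |g ξp| := by
        have := le_abs_self (g m)
        linarith
      rcases le_or_gt (g t) 0 with hgt | hgt
      · linarith
      · have h6 := mul_le_mul_of_nonneg_right hl3 hgt.le
        have : (0:ℝ) ≤ |g ξm| := abs_nonneg _
        linarith
    · have hne : (0:ℝ) < t - ξm := sub_pos.2 (hmlt.trans_le htm)
      have hl0 : 0 ≤ (t - m) / (t - ξm) := div_nonneg (by linarith) hne.le
      have hl0' : (t - m) / (t - ξm) ≤ 1 := by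
        rw [div_le_one hne]; linarith
      have hb0 : 0 ≤ (m - ξm) / (t - ξm) := div_nonneg (by linarith) hne.le
      have hl1 : (t - m) / (t - ξm) + (m - ξm) / (t - ξm) = 1 := by
        field_simp
        ring
      have hco := hg.2 (Set.left_mem_Icc.2 hξ.le) ht hl0 hb0 hl1
      have ht' : ((t - m) / (t - ξm)) • ξm + ((m - ξm) / (t - ξm)) • t = m := by
        simp only [smul_eq_mul]
        field_simp
        ring
      rw [ht'] at hco
      simp only [smul_eq_mul] at hco
      have hl3 : 1 / 2 ≤ (m - ξm) / (t - ξm) := by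
        rw [div_le_div_iff₀ (by norm_num) hne]
        simp only [hm_def]
        linarith [ht.2]
      have h5 : -((t - m) / (t - ξm) * g ξm) ≤ |g ξm| := by
        have : |(t - m) / (t - ξm) * g ξm| ≤ |g ξm| := by
          rw [abs_mul, abs_of_nonneg hl0]
          exact mul_le_of_le_one_left (abs_nonneg _) hl0'
        linarith [neg_le_abs ((t - m) / (t - ξm) * g ξm)]
      have hN : (m - ξm) / (t - ξm) * g t ≤ |g m| + |g ξm| := by
        have := le_abs_self (g m)
        linarith
      rcases le_or_gt (g t) 0 with hgt | hgt
      · linarith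
      · have h6 := mul_le_mul_of_nonneg_right hl3 hgt.le
        have : (0:ℝ) ≤ |g ξp| := abs_nonneg _
        linarith
  refine abs_le.2 ⟨?_, hup⟩
  have h1 : -(|g ξm| + |g ξp|) ≤ min (g ξm) (g ξp) :=
    le_min (by linarith [neg_abs_le (g ξm), abs_nonneg (g ξp)])
      (by linarith [neg_abs_le (g ξp), abs_nonneg (g ξm)])
  have : (0:ℝ) ≤ |g m| := abs_nonneg _
  linarith

lemma s10_indicator_meas {s : Set ℝ} (hs : IsOpen s) (hg : ContinuousOn g s) :
    Measurable (s.indicator g) := by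
  apply measurable_of_isOpen
  intro U hU
  have : s.indicator g ⁻¹' U = (s ∩ g ⁻¹' U) ∪ (sᶜ ∩ {_x : ℝ | (0:ℝ) ∈ U}) := by
    ext x
    by_cases hx : x ∈ s <;> by_cases h0 : (0:ℝ) ∈ U <;>
      simp [Set.indicator, hx, h0]
  rw [this]
  exact (hg.isOpen_inter_preimage hs hU).measurableSet.union
    (hs.measurableSet.compl.inter (MeasurableSet.const _))

end S10Aux

/-- the strict Jensen-type inequality \eqref{bigineq} of the paper. -/
theorem statement10
    (ξm ξp : ℝ) (hξ : ξm < ξp)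
    (g : ℝ → ℝ) (hg : StrictConcaveOn ℝ (Set.Icc ξm ξp) g)
    (xm x0 xp z0 : ℝ) (hxm : xm < x0) (hxp : x0 < xp)
    (w : ℝ → ℝ) (hw : ConvexOn ℝ (Set.Icc xm xp) w)
    (hdm : HasDerivWithinAt w ξm (Set.Icc xm xp) xm)
    (hdp : HasDerivWithinAt w ξp (Set.Icc xm xp) xp)
    (hwm : w xm = z0 + ξm * (xm - x0))
    (hwp : w xp = z0 + ξp * (xp - x0))
    (hw0 : z0 < w x0) :
    g ξm * (x0 - xm) + g ξp * (xp - x0)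
      < ∫ x in xm..xp, g (derivWithin w (Set.Icc xm xp) x) := by
  have hxx : xm < xp := hxm.trans hxp
  have hxxle : xm ≤ xp := hxx.le
  have hξle : ξm ≤ ξp := hξ.le
  have hdne : (0:ℝ) < ξp - ξm := sub_pos.2 hξ
  have hdne' : ξp - ξm ≠ 0 := ne_of_gt hdne
  set R := s10R w xp ξp with hR_def
  have hRd : ∀ x ∈ Set.Ico xm xp, HasDerivWithinAt w (R x) (Set.Ioi x) x :=
    fun x hx => s10R_hasDeriv hw hxxle hdm hdp hx
  have hRmem : ∀ x ∈ Set.Icc xm xp, R x ∈ Set.Icc ξm ξp :=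
    fun x hx => s10R_mem hw hξle hxxle hdm hdp hx
  have hRmono : MonotoneOn R (Set.Icc xm xp) := s10R_mono hw hξle hxxle hdm hdp
  have hRmono' : MonotoneOn R (Set.uIcc xm xp) := by
    rw [Set.uIcc_of_le hxxle]; exact hRmono
  have hRint : IntervalIntegrable R volume xm xp := hRmono'.intervalIntegrable
  -- continuity of w on [xm, xp]
  have hCw : ContinuousOn w (Set.Icc xm xp) := by
    set C : ℝ := max |ξm| |ξp| with hC_def
    have hC0 : 0 ≤ C := le_max_of_le_left (abs_nonneg _)
    have key : ∀ a ∈ Set.Icc xm xp, ∀ b ∈ Set.Icc xm xp, a < b →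
        |w b - w a| ≤ C * (b - a) := by
      intro a ha b hb hab
      obtain ⟨h1, h2⟩ := s10_slope_bounds hw hxxle hdm hdp ha hb hab
      have hba : (0:ℝ) < b - a := sub_pos.2 hab
      have habs : |slope w a b| ≤ C := by
        rw [abs_le]
        constructor
        · have h3 := neg_abs_le ξm
          have h4 := le_max_left |ξm| |ξp|
          linarith
        · have h3 := le_abs_self ξp
          have h4 := le_max_right |ξm| |ξp|
          linarith
      rw [slope_def_field, abs_div, abs_of_pos hba, div_le_iff₀ hba] at habs
      exact habs
    have hlip : LipschitzOnWith (Real.toNNReal C) w (Set.Icc xm xp) := by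
      apply LipschitzOnWith.of_dist_le_mul
      intro a ha b hb
      rw [Real.dist_eq, Real.dist_eq, Real.coe_toNNReal C hC0]
      rcases lt_trichotomy a b with h | h | h
      · rw [abs_sub_comm (w a), abs_sub_comm a, abs_of_pos (sub_pos.2 h)]
        exact key a ha b hb h
      · subst h; simp
      · rw [abs_of_pos (sub_pos.2 h)]
        exact key b hb a ha h
    exact hlip.continuousOn
  -- fundamental theorem of calculus for R
  have hFTC : ∀ a b : ℝ, xm ≤ a → a < b → b ≤ xp → ∫ x in a..b, R x = w b - w a := by
    intro a b hax hab hbp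
    apply intervalIntegral.integral_eq_sub_of_hasDeriv_right
    · rw [Set.uIcc_of_le hab.le]
      exact hCw.mono (Set.Icc_subset_Icc hax hbp)
    · rw [min_eq_left hab.le, max_eq_right hab.le]
      intro x hx
      exact hRd x ⟨hax.trans hx.1.le, hx.2.trans_le hbp⟩
    · refine hRint.mono_set ?_
      rw [Set.uIcc_of_le hab.le, Set.uIcc_of_le hxxle]
      exact Set.Icc_subset_Icc hax hbp
  -- strict lower bound for R on (x0, xp)
  have hslope_x0 : ξm < slope w xm x0 := by
    rw [slope_def_field, lt_div_iff₀ (sub_pos.2 hxm), hwm]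
    linarith
  have hRlow : ∀ x ∈ Set.Ioo x0 xp, ξm < R x := by
    intro x hx
    have hx0p : x0 < xp := hx.1.trans hx.2
    have hxIcc : x ∈ Set.Icc xm xp := ⟨hxm.le.trans hx.1.le, hx.2.le⟩
    have h1 : slope w x0 x ≤ R x := by
      rw [hR_def]
      simp only [s10R]
      rw [if_pos hx.2]
      refine le_csInf ((Set.nonempty_Ioo.2 hx.2).image _) ?_
      rintro z ⟨u, hu, rfl⟩
      have h3 : slope w x x0 ≤ slope w x u :=
        hw.slope_mono hxIcc ⟨⟨hxm.le, hx0p.le⟩, Set.mem_singleton_iff.not.2 hx.1.ne⟩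
          ⟨⟨hxIcc.1.trans hu.1.le, hu.2.le⟩, Set.mem_singleton_iff.not.2 hu.1.ne'⟩
          (hx.1.le.trans hu.1.le)
      rwa [slope_comm] at h3
    have h2 : slope w xm x0 ≤ slope w x0 x := by
      have h3 : slope w x0 xm ≤ slope w x0 x :=
        hw.slope_mono ⟨hxm.le, hx0p.le⟩
          ⟨⟨le_rfl, hxxle⟩, Set.mem_singleton_iff.not.2 hxm.ne⟩
          ⟨hxIcc, Set.mem_singleton_iff.not.2 hx.1.ne'⟩ hxIcc.1
      rwa [slope_comm w x0 xm] at h3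
    linarith
  -- the chord of g
  set s : ℝ := (g ξp - g ξm) / (ξp - ξm) with hs_def
  set c : ℝ := g ξm - s * ξm with hc_def
  have hchord : ∀ t ∈ Set.Icc ξm ξp, s * t + c ≤ g t := by
    intro t ht
    have h2 := s10_chord_le hξ hg.concaveOn ht
    have h3 : s * t + c = g ξm + (g ξp - g ξm) / (ξp - ξm) * (t - ξm) := by
      rw [hc_def, hs_def]; ring
    linarith
  have hchord_lt : ∀ t ∈ Set.Ioo ξm ξp, s * t + c < g t := by
    intro t ht
    have h2 := s10_chord_lt hξ hg ht
    have h3 : s * t + c = g ξm + (g ξp - g ξm) / (ξp - ξm) * (t - ξm) := by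
      rw [hc_def, hs_def]; ring
    linarith
  -- integrability of g ∘ R
  have hclampmem : ∀ x : ℝ, max xm (min x xp) ∈ Set.Icc xm xp := fun x =>
    ⟨le_max_left _ _, max_le hxxle (min_le_right _ _)⟩
  set R' : ℝ → ℝ := fun x => R (max xm (min x xp)) with hR'_def
  have hR'mono : Monotone R' := fun a b hab =>
    hRmono (hclampmem a) (hclampmem b) (max_le_max le_rfl (min_le_min hab le_rfl))
  have hR'meas : Measurable R' := hR'mono.measurable
  have hgc : ContinuousOn g (Set.Ioo ξm ξp) := by
    have h := hg.concaveOn.continuousOn_interior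
    rwa [interior_Icc] at h
  set gI : ℝ → ℝ := (Set.Ioo ξm ξp).indicator g with hgI_def
  have hgImeas : Measurable gI := s10_indicator_meas isOpen_Ioo hgc
  set Φ : ℝ → ℝ := fun x => if R' x = ξm then g ξm else if R' x = ξp then g ξp else gI (R' x)
    with hΦ_def
  have hΦmeas : Measurable Φ := by
    apply Measurable.ite (hR'meas (measurableSet_singleton ξm)) measurable_const
    exact Measurable.ite (hR'meas (measurableSet_singleton ξp)) measurable_const
      (hgImeas.comp hR'meas)
  have hΦeq : ∀ x ∈ Set.Icc xm xp, Φ x = g (R x) := by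
    intro x hx
    have hcl : R' x = R x := by
      simp only [hR'_def]
      rw [min_eq_left hx.2, max_eq_right hx.1]
    simp only [hΦ_def]
    rw [hcl]
    by_cases h1 : R x = ξm
    · rw [if_pos h1, h1]
    · rw [if_neg h1]
      by_cases h2 : R x = ξp
      · rw [if_pos h2, h2]
      · rw [if_neg h2, hgI_def]
        have hmem : R x ∈ Set.Ioo ξm ξp := by
          obtain ⟨hl, hr⟩ := hRmem x hx
          exact ⟨hl.lt_of_ne (Ne.symm h1), hr.lt_of_ne h2⟩
        exact Set.indicator_of_mem hmem g
  obtain ⟨K, hK⟩ := s10_gbound hξ hg.concaveOn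
  have hgRIoc : IntegrableOn (fun x => g (R x)) (Set.Ioc xm xp) volume := by
    have hΦint : IntegrableOn Φ (Set.Ioc xm xp) volume := by
      refine Integrable.mono' (g := fun _ => K)
        (integrableOn_const measure_Ioc_lt_top.ne)
        hΦmeas.aestronglyMeasurable ?_
      refine (ae_restrict_iff' measurableSet_Ioc).2 (Filter.Eventually.of_forall ?_)
      intro x hx
      rw [Real.norm_eq_abs, hΦeq x (Set.mem_Icc_of_Ioc hx)]
      exact hK _ (hRmem x (Set.mem_Icc_of_Ioc hx))
    exact hΦint.congr_fun (fun x hx => hΦeq x (Set.mem_Icc_of_Ioc hx)) measurableSet_Ioc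
  have hgRint : IntervalIntegrable (fun x => g (R x)) volume xm xp := by
    rw [intervalIntegrable_iff_integrableOn_Ioc_of_le hxxle]
    exact hgRIoc
  have hlinint : IntervalIntegrable (fun x => s * R x + c) volume xm xp :=
    (hRint.const_mul s).add intervalIntegrable_const
  have hhint : IntervalIntegrable (fun x => g (R x) - (s * R x + c)) volume xm xp :=
    hgRint.sub hlinint
  -- strict positivity of the excess integral
  have hpos : 0 < ∫ x in xm..xp, (g (R x) - (s * R x + c)) := by
    rw [intervalIntegral.integral_of_le hxxle, integral_Ioc_eq_integral_Ioo]
    have hIntIoo : IntegrableOn (fun x => g (R x) - (s * R x + c)) (Set.Ioo xm xp) volume :=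
      ((intervalIntegrable_iff_integrableOn_Ioc_of_le hxxle).1 hhint).mono_set
        Set.Ioo_subset_Ioc_self
    have hnn : 0 ≤ᵐ[volume.restrict (Set.Ioo xm xp)] fun x => g (R x) - (s * R x + c) := by
      refine (ae_restrict_iff' measurableSet_Ioo).2 (Filter.Eventually.of_forall ?_)
      intro x hx
      have h2 := hchord (R x) (hRmem x (Set.mem_Icc_of_Ioo hx))
      simp only [Pi.zero_apply]
      linarith
    have h0 : 0 ≤ ∫ x in Set.Ioo xm xp, (g (R x) - (s * R x + c)) :=
      integral_nonneg_of_ae hnn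
    rcases h0.lt_or_eq with hlt | heq
    · exact hlt
    exfalso
    have hae := (integral_eq_zero_iff_of_nonneg_ae hnn hIntIoo).1 heq.symm
    have hae2 : ∀ᵐ x ∂volume.restrict (Set.Ioo x0 xp),
        (fun x => g (R x) - (s * R x + c)) x = 0 :=
      ae_restrict_of_ae_restrict_of_subset (Set.Ioo_subset_Ioo hxm.le le_rfl) hae
    have hae3 : ∀ᵐ x ∂volume.restrict (Set.Ioo x0 xp), R x = ξp := by
      filter_upwards [hae2, ae_restrict_mem measurableSet_Ioo] with x hx0 hxmem
      have hxIcc : x ∈ Set.Icc xm xp := ⟨hxm.le.trans hxmem.1.le, hxmem.2.le⟩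
      have hle : R x ≤ ξp := (hRmem x hxIcc).2
      by_contra hne
      have hlt2 : R x < ξp := hle.lt_of_ne hne
      have hgt : ξm < R x := hRlow x hxmem
      have h4 := hchord_lt (R x) ⟨hgt, hlt2⟩
      linarith
    have hint_congr : ∫ x in Set.Ioo x0 xp, R x = ∫ _x in Set.Ioo x0 xp, (ξp : ℝ) :=
      integral_congr_ae hae3
    have hconst : ∫ _x in Set.Ioo x0 xp, (ξp : ℝ) = (xp - x0) * ξp := by
      rw [setIntegral_const, Real.volume_real_Ioo_of_le (by linarith), smul_eq_mul]
    have hFTC2 := hFTC x0 xp hxm.le hxp le_rfl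
    rw [intervalIntegral.integral_of_le hxp.le, integral_Ioc_eq_integral_Ioo,
      hint_congr, hconst, hwp] at hFTC2
    nlinarith [hFTC2, hw0]
  -- value of the linear part
  have hint_lin : ∫ x in xm..xp, (s * R x + c) = g ξm * (x0 - xm) + g ξp * (xp - x0) := by
    rw [intervalIntegral.integral_add (hRint.const_mul s) intervalIntegrable_const,
      intervalIntegral.integral_const_mul, hFTC xm xp le_rfl hxx le_rfl,
      intervalIntegral.integral_const, hwp, hwm, smul_eq_mul, hc_def, hs_def]
    field_simp
    ring
  have hsplit : ∫ x in xm..xp, g (R x)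
      = (∫ x in xm..xp, (s * R x + c)) + ∫ x in xm..xp, (g (R x) - (s * R x + c)) := by
    rw [← intervalIntegral.integral_add hlinint hhint]
    exact intervalIntegral.integral_congr fun x _ => by ring
  -- replacing derivWithin by R under the integral
  have hcongrD : ∫ x in xm..xp, g (derivWithin w (Set.Icc xm xp) x)
      = ∫ x in xm..xp, g (R x) := by
    apply intervalIntegral.integral_congr_ae
    have hv : MonotoneOn (fun y => w y - ξm * y) (Set.Icc xm xp) := by
      intro a ha b hb hab'
      rcases eq_or_lt_of_le hab' with rfl | hab
      · exact le_rfl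
      have h1 := (s10_slope_bounds hw hxxle hdm hdp ha hb hab).1
      rw [slope_def_field, le_div_iff₀ (sub_pos.2 hab)] at h1
      show w a - ξm * a ≤ w b - ξm * b
      nlinarith [h1]
    have hvd := hv.ae_differentiableWithinAt_of_mem
    have hxpn : ∀ᵐ x : ℝ, x ≠ xp := by
      rw [ae_iff]
      simp only [not_not, Set.setOf_eq_eq_singleton]
      exact Real.volume_singleton
    filter_upwards [hvd, hxpn] with x hvdx hxne hxI
    rw [Set.uIoc_of_le hxxle] at hxI
    have hxIoo : x ∈ Set.Ioo xm xp := ⟨hxI.1, hxI.2.lt_of_ne hxne⟩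
    have hxIcc : x ∈ Set.Icc xm xp := Set.mem_Icc_of_Ioo hxIoo
    have hdv := hvdx hxIcc
    have hdw : DifferentiableWithinAt ℝ w (Set.Icc xm xp) x := by
      have h5 : DifferentiableWithinAt ℝ (fun y => (w y - ξm * y) + ξm * y)
          (Set.Icc xm xp) x := hdv.add ((differentiableWithinAt_id.const_mul ξm))
      simpa using h5
    have hS : Set.Icc xm xp ∈ nhds x := Icc_mem_nhds hxIoo.1 hxIoo.2
    have h1 : HasDerivWithinAt w (derivWithin w (Set.Icc xm xp) x) (Set.Ioi x) x :=
      hdw.hasDerivWithinAt.mono_of_mem_nhdsWithin (nhdsWithin_le_nhds hS)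
    have h2 : HasDerivWithinAt w (R x) (Set.Ioi x) x := hRd x ⟨hxIoo.1.le, hxIoo.2⟩
    have h3 := h1.derivWithin (uniqueDiffWithinAt_Ioi x)
    have h4 := h2.derivWithin (uniqueDiffWithinAt_Ioi x)
    have h6 : derivWithin w (Set.Icc xm xp) x = R x := by rw [← h3, h4]
    rw [h6]
  rw [hcongrD, hsplit, hint_lin]
  linarith [hpos]
end

section
/- Let Ω ⊂ ℝ² be a compact convex set, let u : Ω → ℝ be convex, write C = epi(u) ⊂ ℝ³, and let ε > 0. Let A, B ∈ ℝ³ be points such that A + (0,0,ε) ∈ C and B + (0,0,ε) ∈ C. Then for every s < 0, the set C_s = C ∩ [(1−s)C + sA] ∩ [(1−s)C + sB] is the epigraph of a convex function u⁽ˢ⁾ : Ω → ℝ satisfying u ≤ u⁽ˢ⁾ ≤ u + |s|ε. -/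
open Set MeasureTheory Pointwise

lemma epi_homothety_aux (Ω : Set (ℝ × ℝ)) (hΩconv : Convex ℝ Ω)
    (u : ℝ × ℝ → ℝ) (hu : ConvexOn ℝ Ω u)
    (ε : ℝ) (A : (ℝ × ℝ) × ℝ) (hA1 : A.1 ∈ Ω) (hA2 : u A.1 ≤ A.2 + ε)
    (s : ℝ) (hs : s < 0) :
    ConvexOn ℝ Ω (fun x => (1 - s) * u ((1 / (1 - s)) • x + (-s / (1 - s)) • A.1) + s * A.2) ∧
    (∀ x ∈ Ω, (1 - s) * u ((1 / (1 - s)) • x + (-s / (1 - s)) • A.1) + s * A.2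
        ≤ u x + (-s) * ε) ∧
    (∀ p : (ℝ × ℝ) × ℝ, p.1 ∈ Ω →
      (p ∈ (fun c => (1 - s) • c + s • A) '' epi Ω u ↔
        (1 - s) * u ((1 / (1 - s)) • p.1 + (-s / (1 - s)) • A.1) + s * A.2 ≤ p.2)) := by
  have ht : (0 : ℝ) < 1 - s := by linarith
  have hne : (1 : ℝ) - s ≠ 0 := ne_of_gt ht
  have hc1 : (0 : ℝ) ≤ 1 / (1 - s) := by positivity
  have hc2 : (0 : ℝ) ≤ -s / (1 - s) := by
    apply div_nonneg <;> linarith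
  have hsum : 1 / (1 - s) + -s / (1 - s) = 1 := by field_simp; ring
  have hmem : ∀ x ∈ Ω, (1 / (1 - s)) • x + (-s / (1 - s)) • A.1 ∈ Ω := fun x hx =>
    hΩconv hx hA1 hc1 hc2 hsum
  refine ⟨⟨hΩconv, fun x hx y hy a b ha hb hab => ?_⟩, ?_, ?_⟩
  · have hb1 : b = 1 - a := by linarith
    subst hb1
    have key : (1 / (1 - s)) • (a • x + (1 - a) • y) + (-s / (1 - s)) • A.1 =
        a • ((1 / (1 - s)) • x + (-s / (1 - s)) • A.1)
          + (1 - a) • ((1 / (1 - s)) • y + (-s / (1 - s)) • A.1) := by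
      module
    simp only [smul_eq_mul]
    rw [key]
    have h := hu.2 (hmem x hx) (hmem y hy) ha hb hab
    simp only [smul_eq_mul] at h
    nlinarith [mul_le_mul_of_nonneg_left h ht.le]
  · intro x hx
    have h1 := hu.2 hx hA1 hc1 hc2 hsum
    simp only [smul_eq_mul] at h1
    have h2 := mul_le_mul_of_nonneg_left h1 ht.le
    have e1 : (1 - s) * (1 / (1 - s) * u x + -s / (1 - s) * u A.1)
        = u x + (-s) * u A.1 := by field_simp
    rw [e1] at h2
    have h3 : (-s) * u A.1 ≤ (-s) * (A.2 + ε) :=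
      mul_le_mul_of_nonneg_left hA2 (by linarith)
    nlinarith
  · intro p hp
    constructor
    · rintro ⟨⟨y, w⟩, ⟨hy, hw⟩, heq⟩
      have h1 : (1 - s) • y + s • A.1 = p.1 := by
        have := congrArg Prod.fst heq; simpa using this
      have h2 : (1 - s) * w + s * A.2 = p.2 := by
        have := congrArg Prod.snd heq; simpa using this
      have hy' : (1 / (1 - s)) • p.1 + (-s / (1 - s)) • A.1 = y := by
        rw [← h1]
        match_scalars <;> (try field_simp) <;> (try ring)
      rw [hy']
      nlinarith [mul_le_mul_of_nonneg_left hw ht.le]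
    · intro h
      refine ⟨((1 / (1 - s)) • p.1 + (-s / (1 - s)) • A.1, (p.2 - s * A.2) / (1 - s)),
        ⟨hmem _ hp, ?_⟩, ?_⟩
      · rw [le_div_iff₀ ht]
        linarith [h]
      · have hfst : (1 - s) • ((1 / (1 - s)) • p.1 + (-s / (1 - s)) • A.1) + s • A.1 = p.1 := by
          match_scalars <;> (try field_simp) <;> (try ring)
        have hsnd : (1 - s) * ((p.2 - s * A.2) / (1 - s)) + s * A.2 = p.2 := by
          field_simp
          ring
        exact Prod.ext (by simpa using hfst) (by simpa using hsnd)

/-- For `s < 0` and points `A`, `B` with `A + (0,0,ε) ∈ C = epi(u)`,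
`B + (0,0,ε) ∈ C`, the set `C ∩ [(1−s)C + sA] ∩ [(1−s)C + sB]` is the epigraph of a
convex function `u⁽ˢ⁾` with `u ≤ u⁽ˢ⁾ ≤ u + |s|ε`. -/
theorem statement12
    (Ω : Set (ℝ × ℝ)) (hΩc : IsCompact Ω) (hΩconv : Convex ℝ Ω)
    (u : ℝ × ℝ → ℝ) (hu : ConvexOn ℝ Ω u)
    (ε : ℝ) (hε : 0 < ε)
    (A B : (ℝ × ℝ) × ℝ)
    (hA : A + ((0, 0), ε) ∈ epi Ω u) (hB : B + ((0, 0), ε) ∈ epi Ω u) :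
    ∀ s : ℝ, s < 0 →
      ∃ us : ℝ × ℝ → ℝ, ConvexOn ℝ Ω us ∧
        epi Ω us =
          epi Ω u ∩ ((fun c => (1 - s) • c + s • A) '' epi Ω u)
            ∩ ((fun c => (1 - s) • c + s • B) '' epi Ω u) ∧
        ∀ x ∈ Ω, u x ≤ us x ∧ us x ≤ u x + |s| * ε := by
  obtain ⟨hA1, hA2⟩ := hA
  obtain ⟨hB1, hB2⟩ := hB
  simp only [Prod.fst_add, Prod.snd_add] at hA1 hA2 hB1 hB2
  have hA1' : A.1 ∈ Ω := by
    have e : A.1 + ((0:ℝ), (0:ℝ)) = A.1 := by ext <;> simp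
    simpa [e] using hA1
  have hB1' : B.1 ∈ Ω := by
    have e : B.1 + ((0:ℝ), (0:ℝ)) = B.1 := by ext <;> simp
    simpa [e] using hB1
  have hA2' : u A.1 ≤ A.2 + ε := by
    have e : A.1 + ((0:ℝ), (0:ℝ)) = A.1 := by ext <;> simp
    simpa [e] using hA2
  have hB2' : u B.1 ≤ B.2 + ε := by
    have e : B.1 + ((0:ℝ), (0:ℝ)) = B.1 := by ext <;> simp
    simpa [e] using hB2
  intro s hs
  obtain ⟨hAconv, hAbound, hAimg⟩ := epi_homothety_aux Ω hΩconv u hu ε A hA1' hA2' s hs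
  obtain ⟨hBconv, hBbound, hBimg⟩ := epi_homothety_aux Ω hΩconv u hu ε B hB1' hB2' s hs
  set uA := fun x => (1 - s) * u ((1 / (1 - s)) • x + (-s / (1 - s)) • A.1) + s * A.2 with huA
  set uB := fun x => (1 - s) * u ((1 / (1 - s)) • x + (-s / (1 - s)) • B.1) + s * B.2 with huB
  refine ⟨fun x => max (u x) (max (uA x) (uB x)), ?_, ?_, ?_⟩
  · exact hu.sup (hAconv.sup hBconv)
  · ext ⟨x, z⟩
    simp only [epi, Set.mem_setOf_eq, Set.mem_inter_iff]
    constructor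
    · rintro ⟨hx, hz⟩
      rw [max_le_iff, max_le_iff] at hz
      exact ⟨⟨⟨hx, hz.1⟩, (hAimg (x, z) hx).2 hz.2.1⟩, (hBimg (x, z) hx).2 hz.2.2⟩
    · rintro ⟨⟨⟨hx, h1⟩, h2⟩, h3⟩
      exact ⟨hx, max_le h1 (max_le ((hAimg (x, z) hx).1 h2) ((hBimg (x, z) hx).1 h3))⟩
  · intro x hx
    have habs : |s| = -s := abs_of_neg hs
    refine ⟨le_max_left _ _, ?_⟩
    rw [habs]
    have h0 : (0 : ℝ) ≤ (-s) * ε := by nlinarith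
    exact max_le (by linarith) (max_le (hAbound x hx) (hBbound x hx))
end

section
/- Let f : ℝ → ℝ be continuous, let u : [a, b] → ℝ be convex, and let O = (x_O, z_O) ∈ ℝ² with a < x_O < b and z_O < u(x_O). Let ũ : [a, b] → ℝ be the convex function whose epigraph is conv(epi(u) ∪ {O}), and for 0 ≤ s ≤ 1 let u⁽ˢ⁾ : [a, b] → ℝ be the convex function whose epigraph is (1−s)·epi(u) + s·epi(ũ). Then F(u⁽ˢ⁾) = (1−s)·F(u) + s·F(ũ) for all 0 ≤ s ≤ 1, where F(v) = ∫_a^b f(v'(x)) dx; that is, s ↦ F(u⁽ˢ⁾) is affine on [0, 1]. -/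
open Set MeasureTheory Pointwise

namespace S17
open Filter Topology

section A
/-- A convex function on `[a,b]` is bounded below. -/
lemma bddBelow_of_convexOn {a b : ℝ} (hab : a < b) {v : ℝ → ℝ}
    (hv : ConvexOn ℝ (Icc a b) v) : ∃ m : ℝ, ∀ x ∈ Icc a b, m ≤ v x := by
  set c := (a + b) / 2 with hc
  have hac : a < c := by simp only [hc]; linarith
  have hcb : c < b := by simp only [hc]; linarith
  have hcm : c ∈ Icc a b := ⟨hac.le, hcb.le⟩
  have ham : a ∈ Icc a b := ⟨le_refl _, hab.le⟩
  have hbm : b ∈ Icc a b := ⟨hab.le, le_refl _⟩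
  refine ⟨min (v b - max ((b - a) * slope v c b) 0) (v a + min ((b - a) * slope v a c) 0),
    fun x hx => ?_⟩
  rcases le_or_gt x c with h | h
  · -- x ≤ c < b
    have hxb : x < b := lt_of_le_of_lt h hcb
    have hs : slope v x b ≤ slope v c b := by
      have h1 : slope v b x ≤ slope v b c :=
        (hv.slope_mono hbm) ⟨hx, fun hxx => (hxb.ne (by simpa using hxx)).elim⟩
          ⟨hcm, fun hcc => (hcb.ne (by simpa using hcc)).elim⟩ h
      rwa [slope_comm v b x, slope_comm v b c] at h1
    have hvx : v b - v x = (b - x) * slope v x b := by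
      rw [slope_def_field, mul_div_cancel₀]
      linarith
    refine le_trans (min_le_left _ _) ?_
    rcases le_or_gt 0 (slope v c b) with hs2 | hs2
    · have : (b - x) * slope v x b ≤ (b - a) * slope v c b := by
        nlinarith [hx.1, hxb.le]
      have hm := le_max_left ((b - a) * slope v c b) 0
      linarith
    · have : (b - x) * slope v x b ≤ 0 := by nlinarith [hxb.le]
      have hm := le_max_right ((b - a) * slope v c b) 0
      linarith
  · -- c < x
    have hax : a < x := lt_trans hac h
    have hs : slope v a c ≤ slope v a x :=
      (hv.slope_mono ham) ⟨hcm, fun hcc => (hac.ne' (by simpa using hcc)).elim⟩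
        ⟨hx, fun hxx => (hax.ne' (by simpa using hxx)).elim⟩ h.le
    have hvx : v x - v a = (x - a) * slope v a x := by
      rw [slope_def_field, mul_div_cancel₀]
      linarith
    refine le_trans (min_le_right _ _) ?_
    rcases le_or_gt 0 (slope v a c) with hs2 | hs2
    · have : (x - a) * slope v a x ≥ 0 := by nlinarith [hax.le]
      have hm := min_le_right ((b - a) * slope v a c) 0
      linarith
    · have : (x - a) * slope v a x ≥ (b - a) * slope v a c := by
        nlinarith [hax.le, hx.2]
      have hm := min_le_left ((b - a) * slope v a c) 0
      linarith


end A

section B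
variable {a b : ℝ} {v : ℝ → ℝ}
/-- Legendre-type transform of `v` over `[a, b]`. -/
noncomputable def cj (a b : ℝ) (v : ℝ → ℝ) (p : ℝ) : ℝ :=
  sSup ((fun x => p * x - v x) '' Icc a b)

variable {a b : ℝ} {v : ℝ → ℝ}

lemma cj_nonempty (hab : a < b) (p : ℝ) :
    ((fun x => p * x - v x) '' Icc a b).Nonempty :=
  ⟨_, mem_image_of_mem _ (left_mem_Icc.2 hab.le)⟩

lemma cj_bddAbove (hab : a < b) {m : ℝ} (hm : ∀ x ∈ Icc a b, m ≤ v x) (p : ℝ) :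
    BddAbove ((fun x => p * x - v x) '' Icc a b) := by
  refine ⟨|p| * (|a| + |b|) - m, ?_⟩
  rintro y ⟨x, hx, rfl⟩
  have h1 : p * x ≤ |p| * (|a| + |b|) := by
    calc p * x ≤ |p * x| := le_abs_self _
    _ = |p| * |x| := abs_mul _ _
    _ ≤ |p| * (|a| + |b|) := by
        have : |x| ≤ |a| + |b| := by
          rcases le_max_iff.1 (abs_le_max_abs_abs hx.1 hx.2) with h | h
          · exact le_trans h (le_add_of_nonneg_right (abs_nonneg _))
          · exact le_trans h (le_add_of_nonneg_left (abs_nonneg _))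
        exact mul_le_mul_of_nonneg_left this (abs_nonneg _)
  have := hm x hx
  simp only []
  linarith

lemma le_cj (hab : a < b) {m : ℝ} (hm : ∀ x ∈ Icc a b, m ≤ v x) {p x : ℝ}
    (hx : x ∈ Icc a b) : p * x - v x ≤ cj a b v p :=
  le_csSup (cj_bddAbove hab hm p) (mem_image_of_mem _ hx)

lemma cj_le (hab : a < b) {p M : ℝ} (h : ∀ x ∈ Icc a b, p * x - v x ≤ M) :
    cj a b v p ≤ M := csSup_le (cj_nonempty hab p) (by rintro y ⟨x, hx, rfl⟩; exact h x hx)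

lemma convexOn_cj (hab : a < b) {m : ℝ} (hm : ∀ x ∈ Icc a b, m ≤ v x) :
    ConvexOn ℝ univ (cj a b v) := by
  refine ⟨convex_univ, fun p _ q _ θ1 θ2 h1 h2 hsum => ?_⟩
  refine cj_le hab fun x hx => ?_
  have e1 : (θ1 • p + θ2 • q) * x - v x
      = θ1 * (p * x - v x) + θ2 * (q * x - v x) := by
    have hv : v x = (θ1 + θ2) * v x := by rw [hsum]; ring
    simp only [smul_eq_mul]
    nlinarith [hv]
  rw [e1]
  have l1 := le_cj hab hm hx (p := p)
  have l2 := le_cj hab hm hx (p := q)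
  have := mul_le_mul_of_nonneg_left l1 h1
  have := mul_le_mul_of_nonneg_left l2 h2
  simp only [smul_eq_mul]
  linarith


end B

section C
/-- A convex function on `[a,b]` is differentiable a.e. on `(a,b)`. -/
lemma ae_diff_of_convexOn {a b : ℝ} (hab : a < b) {v : ℝ → ℝ}
    (hv : ConvexOn ℝ (Icc a b) v) :
    volume {x ∈ Ioo a b | ¬ DifferentiableAt ℝ v x} = 0 := by
  have key : ∀ a' b' : ℝ, a < a' → b' < b →
      volume {x ∈ Ioo a' b' | ¬ DifferentiableAt ℝ v x} = 0 := by
    intro a' b' ha' hb'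
    rcases le_or_gt b' a' with h | hb'a
    · have : Ioo a' b' = ∅ := Ioo_eq_empty (not_lt.2 h)
      simp [this]
    set K := max 0 (-(slope v a a')) with hK
    have hmono : MonotoneOn (fun x => v x + K * x) (Ioo a' b') := by
      intro x hx y hy hxy
      rcases eq_or_lt_of_le hxy with rfl | hlt
      · exact le_refl _
      have hxm : x ∈ Icc a b := ⟨(ha'.trans hx.1).le, (hx.2.trans hb').le⟩
      have hym : y ∈ Icc a b := ⟨(ha'.trans hy.1).le, (hy.2.trans hb').le⟩
      have ham : a ∈ Icc a b := ⟨le_refl _, hab.le⟩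
      have ha'm : a' ∈ Icc a b := ⟨ha'.le, ((hb'a.trans hb').le)⟩
      have hay : a < y := ha'.trans hy.1
      have hax : a < x := ha'.trans hx.1
      have h1 : slope v a y ≤ slope v x y := by
        have := (hv.slope_mono hym)
          ⟨ham, by simp only [mem_singleton_iff]; exact hay.ne⟩
          ⟨hxm, by simp only [mem_singleton_iff]; exact hlt.ne⟩ hax.le
        rwa [slope_comm v y a, slope_comm v y x] at this
      have h2 : slope v a a' ≤ slope v a y := by
        exact (hv.slope_mono ham)
          ⟨ha'm, by simp only [mem_singleton_iff]; exact ha'.ne'⟩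
          ⟨hym, by simp only [mem_singleton_iff]; exact hay.ne'⟩ (hx.1.trans hlt).le
      have hKs : -K ≤ slope v x y := by
        have : -(slope v a a') ≤ K := le_max_right _ _
        linarith
      have hs : v y - v x = (y - x) * slope v x y := by
        rw [slope_def_field, mul_div_cancel₀]
        linarith
      simp only []
      nlinarith [hlt.le]
    have hae := hmono.ae_differentiableWithinAt_of_mem
    have h0 : ∀ᵐ x, ¬ (x ∈ Ioo a' b' ∧ ¬ DifferentiableAt ℝ v x) := by
      filter_upwards [hae] with x hx
      rintro ⟨h1, h2⟩
      have hd2 : DifferentiableAt ℝ (fun x => v x + K * x) x :=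
        (hx h1).differentiableAt ((isOpen_Ioo).mem_nhds h1)
      have hd3 : DifferentiableAt ℝ (fun x => (v x + K * x) - K * x) x :=
        hd2.sub (differentiableAt_fun_id.const_mul K)
      simp only [add_sub_cancel_right] at hd3
      exact h2 hd3
    exact measure_mono_null (fun x hx => not_not_intro hx) (ae_iff.mp h0)
  -- cover (a,b) by compact subintervals
  have hcover : {x ∈ Ioo a b | ¬ DifferentiableAt ℝ v x} ⊆
      ⋃ n : ℕ, {x ∈ Ioo (a + (b-a)/(n+2)) (b - (b-a)/(n+2)) | ¬ DifferentiableAt ℝ v x} := by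
    rintro x ⟨hx, hnd⟩
    have hmin : 0 < min (x - a) (b - x) := lt_min (by linarith [hx.1]) (by linarith [hx.2])
    obtain ⟨n, hn⟩ := exists_nat_gt ((b - a) / min (x - a) (b - x))
    refine mem_iUnion.2 ⟨n, ⟨?_, hnd⟩⟩
    have hn2 : (b - a) / min (x - a) (b - x) < (n : ℝ) + 2 := by
      have : (n : ℝ) ≤ n + 2 := by linarith
      linarith
    have hpos : (0:ℝ) < (n : ℝ) + 2 := by positivity
    have hba : (b - a) / ((n:ℝ) + 2) < min (x - a) (b - x) := by
      rw [div_lt_iff₀ hpos]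
      rw [div_lt_iff₀ hmin] at hn2
      nlinarith [hmin, hn2]
    constructor
    · have := hba.trans_le (min_le_left _ _)
      linarith
    · have := hba.trans_le (min_le_right _ _)
      linarith
  have hba0 : (0:ℝ) < b - a := by linarith
  refine measure_mono_null hcover (measure_iUnion_null fun n => key _ _ ?_ ?_)
  · have : (0:ℝ) < (b - a)/((n:ℝ)+2) := by positivity
    linarith
  · have : (0:ℝ) < (b - a)/((n:ℝ)+2) := by positivity
    linarith

/-- A convex function on `ℝ` is differentiable a.e. -/
lemma ae_diff_of_convexOn_univ {g : ℝ → ℝ} (hg : ConvexOn ℝ univ g) :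
    volume {p : ℝ | ¬ DifferentiableAt ℝ g p} = 0 := by
  have hsub : {p : ℝ | ¬ DifferentiableAt ℝ g p} ⊆
      ⋃ n : ℕ, {p ∈ Ioo (-(n:ℝ) - 2) ((n:ℝ) + 2) | ¬ DifferentiableAt ℝ g p} := by
    intro p hp
    obtain ⟨n, hn⟩ := exists_nat_gt |p|
    refine mem_iUnion.2 ⟨n, ⟨⟨?_, ?_⟩, hp⟩⟩
    · have := neg_abs_le p; linarith
    · have := le_abs_self p; linarith
  refine measure_mono_null hsub (measure_iUnion_null fun n => ?_)
  have h1 : (-(n:ℝ) - 3) < ((n:ℝ) + 3) := by linarith [Nat.cast_nonneg (α := ℝ) n]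
  have := ae_diff_of_convexOn h1 (hg.subset (subset_univ _) (convex_Icc _ _))
  refine measure_mono_null (fun x hx => ?_) this
  exact ⟨⟨by linarith [hx.1.1], by linarith [hx.1.2]⟩, hx.2⟩


end C

section D
variable {a b : ℝ} {v : ℝ → ℝ} {p : ℝ}
section generic
variable {g : ℝ → ℝ}

lemma tendsto_slope_right (hd : DifferentiableAt ℝ g p) :
    Tendsto (slope g p) (𝓝[>] p) (𝓝 (deriv g p)) :=
  (hasDerivAt_iff_tendsto_slope.mp hd.hasDerivAt).mono_left
    (nhdsWithin_mono p (fun x (hx : p < x) => hx.ne'))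

lemma tendsto_slope_left (hd : DifferentiableAt ℝ g p) :
    Tendsto (slope g p) (𝓝[<] p) (𝓝 (deriv g p)) :=
  (hasDerivAt_iff_tendsto_slope.mp hd.hasDerivAt).mono_left
    (nhdsWithin_mono p (fun x (hx : x < p) => hx.ne))

/-- a subgradient inequality to the right bounds the derivative from below -/
lemma le_deriv_of_subgrad (hd : DifferentiableAt ℝ g p) {x : ℝ}
    (h : ∀ q, p < q → g p + (q - p) * x ≤ g q) : x ≤ deriv g p := by
  refine ge_of_tendsto (tendsto_slope_right hd) ?_
  filter_upwards [self_mem_nhdsWithin] with q (hq : p < q)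
  rw [slope_def_field, le_div_iff₀ (by linarith)]
  nlinarith [h q hq]

/-- a subgradient inequality to the left bounds the derivative from above -/
lemma deriv_le_of_subgrad (hd : DifferentiableAt ℝ g p) {x : ℝ}
    (h : ∀ q, q < p → g p + (q - p) * x ≤ g q) : deriv g p ≤ x := by
  refine le_of_tendsto (tendsto_slope_left hd) ?_
  filter_upwards [self_mem_nhdsWithin] with q (hq : q < p)
  rw [slope_def_field, div_le_iff_of_neg (by linarith)]
  nlinarith [h q hq]

end generic

/-- the derivative of the conjugate lies in `[a,b]` -/
lemma deriv_cj_mem (hab : a < b) (hv : ConvexOn ℝ (Icc a b) v)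
    (hd : DifferentiableAt ℝ (cj a b v) p) : deriv (cj a b v) p ∈ Icc a b := by
  obtain ⟨m, hm⟩ := bddBelow_of_convexOn hab hv
  constructor
  · refine le_deriv_of_subgrad hd fun q hq => ?_
    have : ∀ x ∈ Icc a b, p * x - v x ≤ cj a b v q - (q - p) * a := by
      intro x hx
      have h2 : q * x - v x ≤ cj a b v q := le_cj hab hm hx
      have h3 : (q - p) * a ≤ (q - p) * x := mul_le_mul_of_nonneg_left hx.1 (by linarith)
      nlinarith
    have := cj_le hab this
    linarith
  · refine deriv_le_of_subgrad hd fun q hq => ?_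
    have : ∀ x ∈ Icc a b, p * x - v x ≤ cj a b v q - (q - p) * b := by
      intro x hx
      have h2 : q * x - v x ≤ cj a b v q := le_cj hab hm hx
      have h3 : (q - p) * b ≤ (q - p) * x := by nlinarith [hx.2]
      nlinarith
    have := cj_le hab this
    linarith

/-- at a point of differentiability of `v`, the conjugate value is attained -/
lemma cj_deriv_eq (hab : a < b) (hv : ConvexOn ℝ (Icc a b) v) {x : ℝ}
    (hx : x ∈ Icc a b) (hdx : DifferentiableAt ℝ v x) :
    cj a b v (deriv v x) = deriv v x * x - v x := by
  obtain ⟨m, hm⟩ := bddBelow_of_convexOn hab hv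
  refine le_antisymm (cj_le hab fun y hy => ?_) (le_cj hab hm hx)
  rcases lt_trichotomy y x with h | h | h
  · have := hv.slope_le_deriv hy hx h hdx
    rw [slope_def_field, div_le_iff₀ (by linarith)] at this
    nlinarith
  · rw [h]
  · have := hv.deriv_le_slope hx hy h hdx
    rw [slope_def_field, le_div_iff₀ (by linarith)] at this
    nlinarith

/-- a subgradient inequality for `cj` coming from a point of differentiability of `v` -/
lemma cj_subgrad (hab : a < b) (hv : ConvexOn ℝ (Icc a b) v) {x : ℝ}
    (hx : x ∈ Icc a b) (hdx : DifferentiableAt ℝ v x) (q : ℝ) :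
    cj a b v (deriv v x) + (q - deriv v x) * x ≤ cj a b v q := by
  obtain ⟨m, hm⟩ := bddBelow_of_convexOn hab hv
  have h1 : q * x - v x ≤ cj a b v q := le_cj hab hm hx
  rw [cj_deriv_eq hab hv hx hdx]
  nlinarith [h1]

/-- if `v' x < p` then `x ≤ (cj v)' p` -/
lemma le_deriv_cj (hab : a < b) (hv : ConvexOn ℝ (Icc a b) v) {x : ℝ}
    (hx : x ∈ Icc a b) (hdx : DifferentiableAt ℝ v x)
    (hd : DifferentiableAt ℝ (cj a b v) p) (hlt : deriv v x < p) :
    x ≤ deriv (cj a b v) p := by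
  obtain ⟨m, hm⟩ := bddBelow_of_convexOn hab hv
  set g := cj a b v with hg
  set r := deriv v x with hr
  have hs : slope g r p ≤ deriv g p := by
    refine ge_of_tendsto (tendsto_slope_right hd) ?_
    filter_upwards [self_mem_nhdsWithin] with q (hq : p < q)
    have h1 := (convexOn_cj hab hm).slope_mono_adjacent (mem_univ r) (mem_univ q) hlt hq
    rw [slope_def_field, slope_def_field]
    exact h1
  rw [slope_def_field, div_le_iff₀ (by linarith)] at hs
  have h2 := cj_subgrad hab hv hx hdx p
  rw [← hr, ← hg] at h2
  nlinarith [hs, h2]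

/-- if `v' x > p` then `(cj v)' p ≤ x` -/
lemma deriv_cj_le (hab : a < b) (hv : ConvexOn ℝ (Icc a b) v) {x : ℝ}
    (hx : x ∈ Icc a b) (hdx : DifferentiableAt ℝ v x)
    (hd : DifferentiableAt ℝ (cj a b v) p) (hlt : p < deriv v x) :
    deriv (cj a b v) p ≤ x := by
  obtain ⟨m, hm⟩ := bddBelow_of_convexOn hab hv
  set g := cj a b v with hg
  set r := deriv v x with hr
  have hs : deriv g p ≤ slope g p r := by
    refine le_of_tendsto (tendsto_slope_left hd) ?_
    filter_upwards [self_mem_nhdsWithin] with q (hq : q < p)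
    have h1 := (convexOn_cj hab hm).slope_mono_adjacent (mem_univ q) (mem_univ r) hq hlt
    rw [slope_comm g p q, slope_def_field, slope_def_field]
    exact h1
  rw [slope_def_field, le_div_iff₀ (by linarith)] at hs
  have h2 := cj_subgrad hab hv hx hdx p
  rw [← hr, ← hg] at h2
  nlinarith [hs, h2]

/-- two distinct differentiability points cannot share slope `p` if `cj` is differentiable at `p` -/
lemma deriv_eq_unique (hab : a < b) (hv : ConvexOn ℝ (Icc a b) v) {x y : ℝ}
    (hx : x ∈ Icc a b) (hy : y ∈ Icc a b)
    (hdx : DifferentiableAt ℝ v x) (hdy : DifferentiableAt ℝ v y)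
    (hd : DifferentiableAt ℝ (cj a b v) p)
    (hpx : deriv v x = p) (hpy : deriv v y = p) (hxy : x < y) : False := by
  have hsubx := cj_subgrad hab hv hx hdx
  have hsuby := cj_subgrad hab hv hy hdy
  rw [hpx] at hsubx; rw [hpy] at hsuby
  have hdy' : y ≤ deriv (cj a b v) p :=
    le_deriv_of_subgrad hd fun q _ => by linarith [hsuby q]
  have hdx' : deriv (cj a b v) p ≤ x :=
    deriv_le_of_subgrad hd fun q _ => by linarith [hsubx q]
  linarith

end D

section E
variable {a b : ℝ} {v : ℝ → ℝ} {p : ℝ}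
/-- pushforward of Lebesgue measure on `(a,b)` under `deriv v` -/
noncomputable def nu (a b : ℝ) (v : ℝ → ℝ) : Measure ℝ :=
  (volume.restrict (Ioo a b)).map (deriv v)




lemma nu_univ (hab : a < b) : nu a b v univ = ENNReal.ofReal (b - a) := by
  rw [nu, Measure.map_apply (measurable_deriv v) MeasurableSet.univ]
  simp [Real.volume_Ioo]

lemma nu_Iic (hab : a < b) (hv : ConvexOn ℝ (Icc a b) v)
    (hd : DifferentiableAt ℝ (cj a b v) p) :
    nu a b v (Iic p) = ENNReal.ofReal (deriv (cj a b v) p - a) := by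
  set d := deriv (cj a b v) p with hdd
  have hdm : d ∈ Icc a b := deriv_cj_mem hab hv hd
  rw [nu, Measure.map_apply (measurable_deriv v) measurableSet_Iic,
      Measure.restrict_apply ((measurable_deriv v) measurableSet_Iic)]
  set N := {x ∈ Ioo a b | ¬ DifferentiableAt ℝ v x} with hNdef
  have hN : volume N = 0 := ae_diff_of_convexOn hab hv
  set E := {x ∈ Ioo a b | DifferentiableAt ℝ v x ∧ deriv v x = p} with hEdef
  have hE : volume E = 0 := by
    refine Set.Subsingleton.measure_zero ?_ volume
    intro x hx y hy
    by_contra hne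
    rcases lt_or_gt_of_ne hne with h | h
    · exact deriv_eq_unique hab hv (Ioo_subset_Icc_self hx.1) (Ioo_subset_Icc_self hy.1)
        hx.2.1 hy.2.1 hd hx.2.2 hy.2.2 h
    · exact deriv_eq_unique hab hv (Ioo_subset_Icc_self hy.1) (Ioo_subset_Icc_self hx.1)
        hy.2.1 hx.2.1 hd hy.2.2 hx.2.2 h
  apply le_antisymm
  · have hsub : deriv v ⁻¹' Iic p ∩ Ioo a b ⊆ (Ioc a d ∪ N) ∪ E := by
      rintro x ⟨hx1, hx2⟩
      by_cases hdx : DifferentiableAt ℝ v x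
      · rcases lt_or_eq_of_le (mem_Iic.mp (mem_preimage.mp hx1)) with h | h
        · exact Or.inl (Or.inl ⟨hx2.1, le_deriv_cj hab hv (Ioo_subset_Icc_self hx2) hdx hd h⟩)
        · exact Or.inr ⟨hx2, hdx, h⟩
      · exact Or.inl (Or.inr ⟨hx2, hdx⟩)
    calc volume (deriv v ⁻¹' Iic p ∩ Ioo a b) ≤ volume ((Ioc a d ∪ N) ∪ E) :=
          measure_mono hsub
      _ ≤ volume (Ioc a d ∪ N) + volume E := measure_union_le _ _
      _ ≤ volume (Ioc a d) + volume N + volume E := by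
          gcongr; exact measure_union_le _ _
      _ = ENNReal.ofReal (d - a) := by rw [hN, hE, Real.volume_Ioc]; simp
  · have hsub : Ioo a d \ N ⊆ deriv v ⁻¹' Iic p ∩ Ioo a b := by
      rintro x ⟨hx1, hx2⟩
      have hxIoo : x ∈ Ioo a b := ⟨hx1.1, lt_of_lt_of_le hx1.2 hdm.2⟩
      have hdx : DifferentiableAt ℝ v x := by
        by_contra hcon
        exact hx2 ⟨hxIoo, hcon⟩
      refine ⟨?_, hxIoo⟩
      by_contra hcon
      rw [mem_preimage, mem_Iic, not_le] at hcon
      have := deriv_cj_le hab hv (Ioo_subset_Icc_self hxIoo) hdx hd hcon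
      rw [← hdd] at this
      linarith [hx1.2]
    calc ENNReal.ofReal (d - a) = volume (Ioo a d) := by rw [Real.volume_Ioo]
      _ = volume (Ioo a d \ N) := (measure_diff_null hN).symm
      _ ≤ volume (deriv v ⁻¹' Iic p ∩ Ioo a b) := measure_mono hsub

end E

section F
variable {a b : ℝ} {v : ℝ → ℝ} {p : ℝ}
lemma eqOn_of_epi1_eq {v1 v2 : ℝ → ℝ} (h : epi1 a b v1 = epi1 a b v2) :
    ∀ x ∈ Icc a b, v1 x = v2 x := by
  intro x hx
  have h1 : (x, v1 x) ∈ epi1 a b v2 := h ▸ ⟨hx, le_refl _⟩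
  have h2 : (x, v2 x) ∈ epi1 a b v1 := h.symm ▸ ⟨hx, le_refl _⟩
  exact le_antisymm h2.2 h1.2

lemma cj_minkowski (hab : a < b) {s : ℝ} (hs0 : 0 < s) (hs1 : s < 1)
    {u ut w : ℝ → ℝ} (hu : ConvexOn ℝ (Icc a b) u) (hut : ConvexOn ℝ (Icc a b) ut)
    (hepi : epi1 a b w = (1 - s) • epi1 a b u + s • epi1 a b ut)
    (hw : ConvexOn ℝ (Icc a b) w) (p : ℝ) :
    cj a b w p = (1 - s) * cj a b u p + s * cj a b ut p := by
  obtain ⟨mu, hmu⟩ := bddBelow_of_convexOn hab hu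
  obtain ⟨mt, hmt⟩ := bddBelow_of_convexOn hab hut
  obtain ⟨mw, hmw⟩ := bddBelow_of_convexOn hab hw
  -- the key pointwise inequality
  have key : ∀ x1 ∈ Icc a b, ∀ x2 ∈ Icc a b,
      (1 - s) * (p * x1 - u x1) + s * (p * x2 - ut x2) ≤ cj a b w p := by
    intro x1 hx1 x2 hx2
    have hmem : ((1 - s) • ((x1, u x1) : ℝ × ℝ) + s • ((x2, ut x2) : ℝ × ℝ)) ∈ epi1 a b w := by
      rw [hepi]
      exact Set.add_mem_add (smul_mem_smul_set ⟨hx1, le_refl _⟩)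
        (smul_mem_smul_set ⟨hx2, le_refl _⟩)
    have hX : ((1 - s) • ((x1, u x1) : ℝ × ℝ) + s • ((x2, ut x2) : ℝ × ℝ)).1
        = (1 - s) * x1 + s * x2 := rfl
    have hZ : ((1 - s) • ((x1, u x1) : ℝ × ℝ) + s • ((x2, ut x2) : ℝ × ℝ)).2
        = (1 - s) * u x1 + s * ut x2 := rfl
    obtain ⟨hXm, hXle⟩ := hmem
    rw [hX] at hXm; rw [hX, hZ] at hXle
    have h1 : p * ((1 - s) * x1 + s * x2) - w ((1 - s) * x1 + s * x2) ≤ cj a b w p :=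
      le_cj hab hmw hXm
    nlinarith [hXle]
  apply le_antisymm
  · refine cj_le hab fun x hx => ?_
    have hmem : (x, w x) ∈ (1 - s) • epi1 a b u + s • epi1 a b ut := by
      rw [← hepi]; exact ⟨hx, le_refl _⟩
    obtain ⟨q1, hq1, q2, hq2, hsum⟩ := hmem
    obtain ⟨r1, hr1, rfl⟩ := hq1
    obtain ⟨r2, hr2, rfl⟩ := hq2
    have hx1 : x = (1 - s) * r1.1 + s * r2.1 := by
      have := congrArg Prod.fst hsum; simpa using this.symm
    have hx2 : w x = (1 - s) * r1.2 + s * r2.2 := by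
      have := congrArg Prod.snd hsum; simpa using this.symm
    have l1 : p * r1.1 - u r1.1 ≤ cj a b u p := le_cj hab hmu hr1.1
    have l2 : p * r2.1 - ut r2.1 ≤ cj a b ut p := le_cj hab hmt hr2.1
    have b1 : u r1.1 ≤ r1.2 := hr1.2
    have b2 : ut r2.1 ≤ r2.2 := hr2.2
    have e : p * x - w x = (1 - s) * (p * r1.1 - r1.2) + s * (p * r2.1 - r2.2) := by
      rw [hx2, hx1]; ring
    rw [e]
    nlinarith [l1, l2, b1, b2]
  · -- sup over x1, then over x2
    have step1 : ∀ x2 ∈ Icc a b,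
        (1 - s) * cj a b u p + s * (p * x2 - ut x2) ≤ cj a b w p := by
      intro x2 hx2
      have h1 : cj a b u p ≤ (cj a b w p - s * (p * x2 - ut x2)) / (1 - s) := by
        refine cj_le hab fun x1 hx1 => ?_
        rw [le_div_iff₀ (by linarith)]
        nlinarith [key x1 hx1 x2 hx2]
      rw [le_div_iff₀ (by linarith)] at h1
      nlinarith
    have h2 : cj a b ut p ≤ (cj a b w p - (1 - s) * cj a b u p) / s := by
      refine cj_le hab fun x2 hx2 => ?_
      rw [le_div_iff₀ hs0]
      nlinarith [step1 x2 hx2]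
    rw [le_div_iff₀ hs0] at h2
    nlinarith

lemma cj_hull (hab : a < b) {u ut : ℝ → ℝ} {xO zO : ℝ}
    (hu : ConvexOn ℝ (Icc a b) u) (hut : ConvexOn ℝ (Icc a b) ut)
    (hutepi : epi1 a b ut = convexHull ℝ (epi1 a b u ∪ {(xO, zO)})) (p : ℝ) :
    cj a b ut p = max (cj a b u p) (p * xO - zO) := by
  obtain ⟨mu, hmu⟩ := bddBelow_of_convexOn hab hu
  obtain ⟨mt, hmt⟩ := bddBelow_of_convexOn hab hut
  set M := max (cj a b u p) (p * xO - zO) with hM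
  apply le_antisymm
  · refine cj_le hab fun x hx => ?_
    have hmem : (x, ut x) ∈ convexHull ℝ (epi1 a b u ∪ {(xO, zO)}) := by
      rw [← hutepi]; exact ⟨hx, le_refl _⟩
    have hhull : convexHull ℝ (epi1 a b u ∪ {(xO, zO)}) ⊆ {q : ℝ × ℝ | p * q.1 - q.2 ≤ M} := by
      apply convexHull_min
      · rintro q (hq | hq)
        · have h2 : p * q.1 - u q.1 ≤ cj a b u p := le_cj hab hmu hq.1
          have h3 : u q.1 ≤ q.2 := hq.2
          simp only [mem_setOf_eq]
          have h4 := le_max_left (cj a b u p) (p * xO - zO)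
          rw [← hM] at h4
          linarith
        · rw [mem_singleton_iff] at hq
          subst hq
          simp only [mem_setOf_eq]
          exact le_max_right _ _
      · intro q1 hq1 q2 hq2 θ1 θ2 h1 h2 hsum
        simp only [mem_setOf_eq] at hq1 hq2 ⊢
        have e : p * (θ1 • q1 + θ2 • q2).1 - (θ1 • q1 + θ2 • q2).2
            = θ1 * (p * q1.1 - q1.2) + θ2 * (p * q2.1 - q2.2) := by
          simp only [Prod.fst_add, Prod.snd_add, Prod.smul_fst, Prod.smul_snd, smul_eq_mul]
          ring
        rw [e]
        have hMM : θ1 * M + θ2 * M = M := by rw [← add_mul, hsum, one_mul]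
        nlinarith [mul_le_mul_of_nonneg_left hq1 h1, mul_le_mul_of_nonneg_left hq2 h2]
    exact hhull hmem
  · rw [max_le_iff]
    constructor
    · refine cj_le hab fun x hx => ?_
      have : (x, u x) ∈ epi1 a b ut := by
        rw [hutepi]
        exact subset_convexHull ℝ _ (Or.inl ⟨hx, le_refl _⟩)
      have h2 : p * x - ut x ≤ cj a b ut p := le_cj hab hmt hx
      nlinarith [this.2]
    · have hO : ((xO, zO) : ℝ × ℝ) ∈ epi1 a b ut := by
        rw [hutepi]
        exact subset_convexHull ℝ _ (Or.inr rfl)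
      have h2 : p * xO - ut xO ≤ cj a b ut p := le_cj hab hmt hO.1
      nlinarith [hO.2]

end F

section G
variable {a b : ℝ} {v : ℝ → ℝ} {p : ℝ}
lemma dense_of_null_compl {D : Set ℝ} (h : volume Dᶜ = 0) : Dense D := by
  rw [dense_iff_inter_open]
  intro U hU hne
  by_contra hcon
  rw [not_nonempty_iff_eq_empty] at hcon
  have hsub : U ⊆ Dᶜ := fun x hx => fun hxD => (eq_empty_iff_forall_notMem.mp hcon x) ⟨hx, hxD⟩
  exact absurd (measure_mono_null hsub h) (hU.measure_pos volume hne).ne'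

lemma meas_ext_dense_Iic {μ ν : Measure ℝ} [IsFiniteMeasure μ] [IsFiniteMeasure ν]
    {D : Set ℝ} (hD : Dense D) (huniv : μ univ = ν univ)
    (h : ∀ p ∈ D, μ (Iic p) = ν (Iic p)) : μ = ν := by
  refine ext_of_generate_finite _
    (BorelSpace.measurable_eq.trans hD.borel_eq_generateFrom_Ioc_mem)
    (isPiSystem_Ioc_mem D D) ?_ huniv
  rintro S ⟨l, hl, u, hu, hlt, rfl⟩
  rw [← Iic_sdiff_Iic,
    measure_diff (Iic_subset_Iic.2 hlt.le) measurableSet_Iic.nullMeasurableSet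
      (measure_ne_top μ _),
    measure_diff (Iic_subset_Iic.2 hlt.le) measurableSet_Iic.nullMeasurableSet
      (measure_ne_top ν _), h u hu, h l hl]

theorem nu_finite (hab : a < b) : IsFiniteMeasure (nu a b v) :=
  ⟨by rw [nu_univ hab]; exact ENNReal.ofReal_lt_top⟩

/-- main measure identity -/
lemma nu_identity (hab : a < b) {s : ℝ} (hs0 : 0 < s) (hs1 : s < 1)
    {u ut w : ℝ → ℝ} (hu : ConvexOn ℝ (Icc a b) u) (hut : ConvexOn ℝ (Icc a b) ut)
    (hw : ConvexOn ℝ (Icc a b) w)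
    (hepi : epi1 a b w = (1 - s) • epi1 a b u + s • epi1 a b ut) :
    nu a b w = ENNReal.ofReal (1 - s) • nu a b u + ENNReal.ofReal s • nu a b ut := by
  obtain ⟨mu, hmu⟩ := bddBelow_of_convexOn hab hu
  obtain ⟨mt, hmt⟩ := bddBelow_of_convexOn hab hut
  obtain ⟨mw, hmw⟩ := bddBelow_of_convexOn hab hw
  have hWfun : cj a b w = fun p => (1 - s) * cj a b u p + s * cj a b ut p :=
    funext (cj_minkowski hab hs0 hs1 hu hut hepi hw)
  haveI : IsFiniteMeasure (nu a b w) := nu_finite hab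
  haveI : IsFiniteMeasure (nu a b u) := nu_finite hab
  haveI : IsFiniteMeasure (nu a b ut) := nu_finite hab
  haveI : IsFiniteMeasure (ENNReal.ofReal (1 - s) • nu a b u + ENNReal.ofReal s • nu a b ut) := by
    constructor
    rw [Measure.add_apply, Measure.smul_apply, Measure.smul_apply, smul_eq_mul, smul_eq_mul]
    exact ENNReal.add_lt_top.2 ⟨ENNReal.mul_lt_top ENNReal.ofReal_lt_top (measure_lt_top _ _),
      ENNReal.mul_lt_top ENNReal.ofReal_lt_top (measure_lt_top _ _)⟩
  set D := {p : ℝ | DifferentiableAt ℝ (cj a b u) p ∧ DifferentiableAt ℝ (cj a b ut) p} with hDdef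
  have hDc : volume Dᶜ = 0 := by
    have h1 := ae_diff_of_convexOn_univ (convexOn_cj hab hmu)
    have h2 := ae_diff_of_convexOn_univ (convexOn_cj hab hmt)
    have : Dᶜ ⊆ {p : ℝ | ¬ DifferentiableAt ℝ (cj a b u) p}
        ∪ {p : ℝ | ¬ DifferentiableAt ℝ (cj a b ut) p} := by
      intro p hp
      rw [hDdef, mem_compl_iff, mem_setOf_eq, not_and_or] at hp
      exact hp.imp id id
    refine measure_mono_null this ?_
    rw [← le_zero_iff]
    refine le_trans (measure_union_le _ _) ?_
    rw [h1, h2]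
    simp
  refine meas_ext_dense_Iic (dense_of_null_compl hDc) ?_ ?_
  · rw [nu_univ hab, Measure.add_apply, Measure.smul_apply, Measure.smul_apply,
      nu_univ hab, nu_univ hab, smul_eq_mul, smul_eq_mul,
      ← ENNReal.ofReal_mul (by linarith), ← ENNReal.ofReal_mul (by linarith),
      ← ENNReal.ofReal_add (by nlinarith) (by nlinarith)]
    ring_nf
  · intro p hp
    obtain ⟨hdu, hdut⟩ := hp
    have hdw : DifferentiableAt ℝ (cj a b w) p := by
      rw [hWfun]
      exact ((hdu.const_mul (1 - s)).add (hdut.const_mul s))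
    have hder : deriv (cj a b w) p
        = (1 - s) * deriv (cj a b u) p + s * deriv (cj a b ut) p := by
      rw [hWfun]
      rw [deriv_fun_add ((hdu.const_mul (1 - s))) ((hdut.const_mul s)),
        deriv_const_mul _ hdu, deriv_const_mul _ hdut]
    have h1 := deriv_cj_mem hab hu hdu
    have h2 := deriv_cj_mem hab hut hdut
    rw [nu_Iic hab hw hdw, Measure.add_apply, Measure.smul_apply, Measure.smul_apply,
      nu_Iic hab hu hdu, nu_Iic hab hut hdut, smul_eq_mul, smul_eq_mul,
      ← ENNReal.ofReal_mul (by linarith), ← ENNReal.ofReal_mul (by linarith),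
      ← ENNReal.ofReal_add (by nlinarith [h1.1]) (by nlinarith [h2.1]), hder]
    ring_nf

end G

section H
variable {a b : ℝ} {v : ℝ → ℝ} {p : ℝ}
/-- On the two tails, the slope measures of `u` and of its hull modification agree;
hence integrability of `f` w.r.t. them is equivalent. -/
lemma integrable_nu_iff (hab : a < b) {u ut : ℝ → ℝ} {xO zO : ℝ}
    (hxOa : a < xO) (hxOb : xO < b)
    (hu : ConvexOn ℝ (Icc a b) u) (hut : ConvexOn ℝ (Icc a b) ut)
    (hutepi : epi1 a b ut = convexHull ℝ (epi1 a b u ∪ {(xO, zO)}))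
    {f : ℝ → ℝ} (hf : Continuous f) :
    Integrable f (nu a b u) ↔ Integrable f (nu a b ut) := by
  obtain ⟨mu, hmu⟩ := bddBelow_of_convexOn hab hu
  obtain ⟨mt, hmt⟩ := bddBelow_of_convexOn hab hut
  haveI : IsFiniteMeasure (nu a b u) := nu_finite hab
  haveI : IsFiniteMeasure (nu a b ut) := nu_finite hab
  -- cj ut = max (cj u) l
  have hcj := cj_hull hab hu hut hutepi
  -- tail thresholds
  set P1 : ℝ := (u a - zO) / (a - xO) with hP1
  set P2 : ℝ := (u b - zO) / (b - xO) with hP2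
  have htail1 : ∀ p < P1, cj a b ut p = cj a b u p := by
    intro p hp
    rw [hcj p, max_eq_left]
    have h1 : p * a - u a ≤ cj a b u p := le_cj hab hmu (left_mem_Icc.2 hab.le)
    have h2 : p * (a - xO) > u a - zO := by
      rw [hP1, lt_div_iff_of_neg (by linarith)] at hp
      linarith [hp]
    nlinarith
  have htail2 : ∀ p > P2, cj a b ut p = cj a b u p := by
    intro p hp
    rw [hcj p, max_eq_left]
    have h1 : p * b - u b ≤ cj a b u p := le_cj hab hmu (right_mem_Icc.2 hab.le)
    have h2 : p * (b - xO) > u b - zO := by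
      rw [gt_iff_lt, hP2, div_lt_iff₀ (by linarith)] at hp
      nlinarith [hp]
    nlinarith
  -- the common differentiability set
  set D := {p : ℝ | DifferentiableAt ℝ (cj a b u) p} with hDdef
  have hDc : volume Dᶜ = 0 := ae_diff_of_convexOn_univ (convexOn_cj hab hmu)
  have hDdense : Dense D := dense_of_null_compl hDc
  -- pointwise equality of Iic-measures on tails
  have hIic1 : ∀ p ∈ D ∩ Iio P1, nu a b u (Iic p) = nu a b ut (Iic p) := by
    rintro p ⟨hpD, hpP⟩
    have hev : cj a b ut =ᶠ[nhds p] cj a b u :=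
      eventually_of_mem (Iio_mem_nhds hpP) (fun q hq => htail1 q hq)
    have hdut : DifferentiableAt ℝ (cj a b ut) p := by
      exact (hpD : DifferentiableAt ℝ (cj a b u) p).congr_of_eventuallyEq hev
    rw [nu_Iic hab hu hpD, nu_Iic hab hut hdut, hev.deriv_eq]
  have hIic2 : ∀ p ∈ D ∩ Ioi P2, nu a b u (Iic p) = nu a b ut (Iic p) := by
    rintro p ⟨hpD, hpP⟩
    have hev : cj a b ut =ᶠ[nhds p] cj a b u :=
      eventually_of_mem (Ioi_mem_nhds hpP) (fun q hq => htail2 q hq)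
    have hdut : DifferentiableAt ℝ (cj a b ut) p :=
      (hpD : DifferentiableAt ℝ (cj a b u) p).congr_of_eventuallyEq hev
    rw [nu_Iic hab hu hpD, nu_Iic hab hut hdut, hev.deriv_eq]
  -- choose cut points
  have hne1 : (D ∩ Iio (P1 - 1)).Nonempty := by
    rcases dense_iff_inter_open.mp hDdense (Iio (P1 - 1)) isOpen_Iio
      ⟨P1 - 2, by simp only [mem_Iio]; linarith⟩ with ⟨x, hx1, hx2⟩
    exact ⟨x, hx2, hx1⟩
  obtain ⟨P, hPD, hPlt⟩ := hne1
  have hPP1 : P < P1 := by simpa using lt_of_lt_of_le hPlt (by linarith)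
  have hne2 : (D ∩ Ioi (max P2 P)).Nonempty := by
    rcases dense_iff_inter_open.mp hDdense (Ioi (max P2 P)) isOpen_Ioi
      ⟨max P2 P + 1, by simp only [mem_Ioi]; linarith⟩
      with ⟨x, hx1, hx2⟩
    exact ⟨x, hx2, hx1⟩
  obtain ⟨Q, hQD, hQgt⟩ := hne2
  have hQP2 : P2 < Q := lt_of_le_of_lt (le_max_left _ _) hQgt
  have hPQ : P < Q := lt_of_le_of_lt (le_max_right _ _) hQgt
  -- restricted measures agree on the tails
  have hres1 : (nu a b u).restrict (Iic P) = (nu a b ut).restrict (Iic P) := by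
    have hPmem : P ∈ D ∩ Iio P1 := ⟨hPD, by simpa using hPP1⟩
    refine meas_ext_dense_Iic (D := (D ∩ Iio P1) ∪ Ioi P) ?_ ?_ ?_
    · rw [dense_iff_inter_open]
      intro U hU hUne
      by_cases hcase : (U ∩ Ioi P).Nonempty
      · obtain ⟨x, hx⟩ := hcase
        exact ⟨x, hx.1, Or.inr hx.2⟩
      · have hUsub : U ⊆ Iio P1 := by
          intro x hx
          have : x ≤ P := by
            by_contra hc
            exact hcase ⟨x, hx, by simpa using lt_of_not_ge hc⟩
          exact lt_of_le_of_lt this hPP1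
        obtain ⟨x, hxU, hxD⟩ := dense_iff_inter_open.mp hDdense U hU hUne
        exact ⟨x, hxU, Or.inl ⟨hxD, hUsub hxU⟩⟩
    · rw [Measure.restrict_apply_univ, Measure.restrict_apply_univ]
      exact hIic1 P hPmem
    · rintro q (⟨hq1, hq2⟩ | hq)
      · rw [Measure.restrict_apply measurableSet_Iic, Measure.restrict_apply measurableSet_Iic]
        rcases le_total q P with h | h
        · rw [Iic_inter_Iic, min_eq_left h]
          exact hIic1 q ⟨hq1, hq2⟩
        · rw [Iic_inter_Iic, min_eq_right h]
          exact hIic1 P hPmem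
      · rw [Measure.restrict_apply measurableSet_Iic, Measure.restrict_apply measurableSet_Iic,
          Iic_inter_Iic, min_eq_right (le_of_lt hq)]
        exact hIic1 P hPmem
  have hres2 : (nu a b u).restrict (Ioi Q) = (nu a b ut).restrict (Ioi Q) := by
    have hQmem : Q ∈ D ∩ Ioi P2 := ⟨hQD, hQP2⟩
    refine meas_ext_dense_Iic (D := (D ∩ Ioi P2) ∪ Iio Q) ?_ ?_ ?_
    · rw [dense_iff_inter_open]
      intro U hU hUne
      by_cases hcase : (U ∩ Iio Q).Nonempty
      · obtain ⟨x, hx⟩ := hcase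
        exact ⟨x, hx.1, Or.inr hx.2⟩
      · have hUsub : U ⊆ Ioi P2 := by
          intro x hx
          have : Q ≤ x := by
            by_contra hc
            exact hcase ⟨x, hx, by simpa using lt_of_not_ge hc⟩
          exact lt_of_lt_of_le hQP2 this
        obtain ⟨x, hxU, hxD⟩ := dense_iff_inter_open.mp hDdense U hU hUne
        exact ⟨x, hxU, Or.inl ⟨hxD, hUsub hxU⟩⟩
    · rw [Measure.restrict_apply_univ, Measure.restrict_apply_univ]
      have e1 : Ioi Q = univ \ Iic Q := by rw [← compl_Iic, compl_eq_univ_diff]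
      rw [e1, measure_diff (subset_univ _) measurableSet_Iic.nullMeasurableSet (measure_ne_top _ _),
        measure_diff (subset_univ _) measurableSet_Iic.nullMeasurableSet (measure_ne_top _ _),
        nu_univ hab, nu_univ hab, hIic2 Q hQmem]
    · rintro q (⟨hq1, hq2⟩ | hq)
      · rw [Measure.restrict_apply measurableSet_Iic, Measure.restrict_apply measurableSet_Iic]
        rcases le_total q Q with h | h
        · have : Iic q ∩ Ioi Q = ∅ := by
            ext x; simp only [mem_inter_iff, mem_Iic, mem_Ioi, mem_empty_iff_false, iff_false]
            rintro ⟨h1, h2⟩; linarith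
          rw [this]
          simp
        · have e1 : Iic q ∩ Ioi Q = Iic q \ Iic Q := by
            ext x; simp only [mem_inter_iff, mem_Iic, mem_Ioi, mem_diff, not_le]
          rw [e1, measure_diff (Iic_subset_Iic.2 h) measurableSet_Iic.nullMeasurableSet
              (measure_ne_top _ _),
            measure_diff (Iic_subset_Iic.2 h) measurableSet_Iic.nullMeasurableSet
              (measure_ne_top _ _), hIic2 q ⟨hq1, hq2⟩, hIic2 Q hQmem]
      · rw [Measure.restrict_apply measurableSet_Iic, Measure.restrict_apply measurableSet_Iic]
        have : Iic q ∩ Ioi Q = ∅ := by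
          ext x; simp only [mem_inter_iff, mem_Iic, mem_Ioi, mem_empty_iff_false, iff_false]
          rintro ⟨h1, h2⟩
          rw [mem_Iio] at hq
          linarith
        rw [this]
        simp
  -- integrability on the middle part is automatic
  have hmid : ∀ μ : Measure ℝ, IsFiniteMeasure μ → IntegrableOn f (Ioc P Q) μ := by
    intro μ hμ
    obtain ⟨C, hC⟩ := (isCompact_Icc (a := P) (b := Q)).exists_bound_of_continuousOn
      hf.continuousOn
    refine Integrable.mono' (integrable_const C) hf.aestronglyMeasurable ?_
    rw [ae_restrict_iff' measurableSet_Ioc]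
    filter_upwards with x hx
    exact hC x (Ioc_subset_Icc_self hx)
  -- split integrability
  have hsplit : ∀ μ : Measure ℝ, IsFiniteMeasure μ →
      (Integrable f μ ↔ IntegrableOn f (Iic P) μ ∧ IntegrableOn f (Ioi Q) μ) := by
    intro μ hμ
    constructor
    · exact fun h => ⟨h.integrableOn, h.integrableOn⟩
    · rintro ⟨h1, h2⟩
      have hmid' := hmid μ hμ
      have hall : IntegrableOn f (Iic P ∪ (Ioc P Q ∪ Ioi Q)) μ := h1.union (hmid'.union h2)
      have huniv : Iic P ∪ (Ioc P Q ∪ Ioi Q) = univ := by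
        ext x
        simp only [mem_union, mem_Iic, mem_Ioc, mem_Ioi, mem_univ, iff_true]
        rcases le_or_gt x P with h | h
        · exact Or.inl h
        · rcases le_or_gt x Q with h' | h'
          · exact Or.inr (Or.inl ⟨h, h'⟩)
          · exact Or.inr (Or.inr h')
      rwa [huniv, integrableOn_univ] at hall
  have e1 : IntegrableOn f (Iic P) (nu a b u) ↔ IntegrableOn f (Iic P) (nu a b ut) := by
    rw [IntegrableOn, IntegrableOn, hres1]
  have e2 : IntegrableOn f (Ioi Q) (nu a b u) ↔ IntegrableOn f (Ioi Q) (nu a b ut) := by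
    rw [IntegrableOn, IntegrableOn, hres2]
  rw [hsplit (nu a b u) ‹_›, hsplit (nu a b ut) ‹_›, e1, e2]

end H

section I
variable {a b : ℝ} {v : ℝ → ℝ} {p : ℝ}
lemma NF1_eq_integral_nu (hab : a < b) {f : ℝ → ℝ} (hf : Continuous f) (v : ℝ → ℝ) :
    NF1 f a b v = ∫ y, f y ∂(nu a b v) := by
  rw [NF1, intervalIntegral.integral_of_le hab.le, integral_Ioc_eq_integral_Ioo, nu,
    integral_map (measurable_deriv v).aemeasurable hf.aestronglyMeasurable]

lemma NF1_congr (hab : a < b) {f v1 v2 : ℝ → ℝ} (h : ∀ x ∈ Icc a b, v1 x = v2 x) :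
    NF1 f a b v1 = NF1 f a b v2 := by
  rw [NF1, NF1, intervalIntegral.integral_of_le hab.le, intervalIntegral.integral_of_le hab.le,
    integral_Ioc_eq_integral_Ioo, integral_Ioc_eq_integral_Ioo]
  refine setIntegral_congr_fun measurableSet_Ioo fun x hx => ?_
  have hev : v1 =ᶠ[nhds x] v2 :=
    Filter.eventually_of_mem (isOpen_Ioo.mem_nhds hx)
      (fun y hy => h y (Ioo_subset_Icc_self hy))
  rw [hev.deriv_eq]


end I

end S17

/-- In the 1D problem, along the nose-stretching family
`epi(u⁽ˢ⁾) = (1−s)·epi(u) + s·epi(ũ)` with `epi(ũ) = conv(epi(u) ∪ {O})`,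
the resistance `F(u⁽ˢ⁾)` is affine in `s` on `[0, 1]`. -/
theorem statement17
    (f : ℝ → ℝ) (hf : Continuous f)
    (a b : ℝ) (hab : a < b)
    (u : ℝ → ℝ) (hu : ConvexOn ℝ (Set.Icc a b) u)
    (xO zO : ℝ) (hxOa : a < xO) (hxOb : xO < b) (hzO : zO < u xO)
    (ut : ℝ → ℝ) (hut : ConvexOn ℝ (Set.Icc a b) ut)
    (hutepi : epi1 a b ut = convexHull ℝ (epi1 a b u ∪ {(xO, zO)}))
    (us : ℝ → ℝ → ℝ)
    (hus : ∀ s ∈ Set.Icc (0 : ℝ) 1, ConvexOn ℝ (Set.Icc a b) (us s) ∧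
      epi1 a b (us s) = (1 - s) • epi1 a b u + s • epi1 a b ut) :
    ∀ s ∈ Set.Icc (0 : ℝ) 1,
      NF1 f a b (us s) = (1 - s) * NF1 f a b u + s * NF1 f a b ut := by
  intro s hs
  have hneu : (epi1 a b u).Nonempty := ⟨(a, u a), ⟨left_mem_Icc.2 hab.le, le_refl _⟩⟩
  have hnet : (epi1 a b ut).Nonempty := ⟨(a, ut a), ⟨left_mem_Icc.2 hab.le, le_refl _⟩⟩
  rcases eq_or_lt_of_le hs.1 with h0 | hs0
  · -- s = 0
    have hepi := (hus 0 ⟨le_refl _, zero_le_one⟩).2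
    have e : (1 - (0:ℝ)) • epi1 a b u + (0:ℝ) • epi1 a b ut = epi1 a b u := by
      rw [sub_zero, one_smul, Set.zero_smul_set hnet, add_zero]
    rw [e] at hepi
    rw [← h0]
    rw [S17.NF1_congr hab (S17.eqOn_of_epi1_eq hepi)]
    ring
  rcases eq_or_lt_of_le hs.2 with h1 | hs1
  · -- s = 1
    have hepi := (hus 1 ⟨zero_le_one, le_refl _⟩).2
    have e : (1 - (1:ℝ)) • epi1 a b u + (1:ℝ) • epi1 a b ut = epi1 a b ut := by
      rw [sub_self, one_smul, Set.zero_smul_set hneu, zero_add]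
    rw [e] at hepi
    rw [h1]
    rw [S17.NF1_congr hab (S17.eqOn_of_epi1_eq hepi)]
    ring
  -- 0 < s < 1
  obtain ⟨hwconv, hepi⟩ := hus s hs
  have hmeas := S17.nu_identity hab hs0 hs1 hu hut hwconv hepi
  have hc1 : ENNReal.ofReal (1 - s) ≠ 0 := (ENNReal.ofReal_pos.2 (by linarith)).ne'
  have hc2 : ENNReal.ofReal s ≠ 0 := (ENNReal.ofReal_pos.2 hs0).ne'
  rw [S17.NF1_eq_integral_nu hab hf, S17.NF1_eq_integral_nu hab hf, S17.NF1_eq_integral_nu hab hf, hmeas]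
  by_cases hint : Integrable f (S17.nu a b u)
  · have hint2 : Integrable f (S17.nu a b ut) :=
      (S17.integrable_nu_iff hab hxOa hxOb hu hut hutepi hf).mp hint
    have i1 : Integrable f (ENNReal.ofReal (1 - s) • S17.nu a b u) :=
      (integrable_smul_measure hc1 ENNReal.ofReal_ne_top).2 hint
    have i2 : Integrable f (ENNReal.ofReal s • S17.nu a b ut) :=
      (integrable_smul_measure hc2 ENNReal.ofReal_ne_top).2 hint2
    rw [integral_add_measure i1 i2, integral_smul_measure, integral_smul_measure,
      ENNReal.toReal_ofReal (by linarith), ENNReal.toReal_ofReal hs0.le]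
    simp [smul_eq_mul]
  · have hint2 : ¬ Integrable f (S17.nu a b ut) := fun h =>
      hint ((S17.integrable_nu_iff hab hxOa hxOb hu hut hutepi hf).mpr h)
    have h3 : ¬ Integrable f (ENNReal.ofReal (1 - s) • S17.nu a b u
        + ENNReal.ofReal s • S17.nu a b ut) := by
      intro hcon
      have := hcon.mono_measure (Measure.le_add_right (le_refl _))
      exact hint ((integrable_smul_measure hc1 ENNReal.ofReal_ne_top).1 this)
    rw [integral_undef hint, integral_undef hint2, integral_undef h3]
    ring
end
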